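/- arXiv:1705.07733 — 5 statements merged into one kernel-verified Lean document; each statement's English description precedes it below -/
import Mathlib

section
/- Let 0 < a < b, ρ > 0, 0 ≤ γ < 1, α > 0 with α > γ, and let φ be a function on (a,b] such that x ↦ ((x^ρ - a^ρ)/ρ)^γ φ(x) extends continuously to [a,b]. Then lim_{x→a+} (ρJ_{a+}^α φ)(x) = 0. -/
open Real MeasureTheory Set Filter Topology

/-! The weight gives `‖φ t‖ ≤ M (t^ρ - a^ρ)^(-γ)`, so `‖igral ρ α a φ x‖` is bounded by a
multiple of `∫_a^x t^(ρ-1) (t^ρ - a^ρ)^(-γ) (x^ρ - t^ρ)^(α-1) dt`. The substitution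
`s = (t^ρ - a^ρ) / (x^ρ - a^ρ)` turns this into `(x^ρ - a^ρ)^(α-γ) / ρ · B(1 - γ, α)`, a finite
Beta integral times a power that vanishes at `x = a` because `α > γ`. -/

/-- Generalized (Katugampola) fractional integral; identity for `α = 0`. -/
noncomputable def igral (ρ α a : ℝ) (φ : ℝ → ℝ) (x : ℝ) : ℝ :=
  if α = 0 then φ x
  else ρ ^ (1 - α) / Real.Gamma α * ∫ t in a..x, t ^ (ρ - 1) * φ t * (x ^ ρ - t ^ ρ) ^ (α - 1)

/-- Generalized (Katugampola) fractional derivative of order `α ∈ (0,1)`. -/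
noncomputable def genD (ρ α a : ℝ) (φ : ℝ → ℝ) (x : ℝ) : ℝ :=
  x ^ (1 - ρ) * deriv (igral ρ (1 - α) a φ) x

/-- Hilfer–Katugampola fractional derivative of order `α` and type `β`. -/
noncomputable def hkD (ρ α β a : ℝ) (φ : ℝ → ℝ) : ℝ → ℝ :=
  igral ρ (β * (1 - α)) a
    (fun s => s ^ (1 - ρ) * deriv (igral ρ ((1 - β) * (1 - α)) a φ) s)

/-- Membership in the weighted space `C_{γ,ρ}[a,b]`. -/
def MemW (ρ γ a b : ℝ) (φ : ℝ → ℝ) : Prop :=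
  ∃ h : ℝ → ℝ, ContinuousOn h (Icc a b) ∧
    ∀ x ∈ Ioc a b, h x = ((x ^ ρ - a ^ ρ) / ρ) ^ γ * φ x

/-- Weighted sup-norm on `C_{γ,ρ}[a,b]`. -/
noncomputable def wnorm (ρ γ a b : ℝ) (φ : ℝ → ℝ) : ℝ :=
  sSup ((fun x => |((x ^ ρ - a ^ ρ) / ρ) ^ γ * φ x|) '' Ioc a b)

theorem integrableOn_rpow_mul_one_sub_rpow {p q : ℝ} (hp : -1 < p) (hq : -1 < q) :
    IntegrableOn (fun s : ℝ => s ^ p * (1 - s) ^ q) (Ioo 0 1) := by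
  have h := Complex.betaIntegral_convergent (u := (p + 1 : ℝ)) (v := (q + 1 : ℝ))
    (by simp; linarith) (by simp; linarith)
  rw [intervalIntegrable_iff_integrableOn_Ioo_of_le zero_le_one] at h
  refine IntegrableOn.congr_fun h.norm (fun s hs => ?_) measurableSet_Ioo
  have hs1 : 0 < 1 - s := sub_pos.2 hs.2
  have hcast : (1 : ℂ) - s = ((1 - s : ℝ) : ℂ) := by push_cast; ring
  rw [norm_mul, hcast, Complex.norm_cpow_eq_rpow_re_of_pos hs.1,
    Complex.norm_cpow_eq_rpow_re_of_pos hs1]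
  simp

theorem strictMonoOn_rpow_sub_div {ρ A c : ℝ} (hρ : 0 < ρ) (hc : 0 < c) :
    StrictMonoOn (fun t : ℝ => (t ^ ρ - A) / c) (Ici 0) := fun _ hs _ _ hst =>
  div_lt_div_of_pos_right (sub_lt_sub_right (rpow_lt_rpow hs hst hρ) A) hc

theorem hasDerivAt_rpow_sub_div {ρ t : ℝ} (ht : 0 < t) (A c : ℝ) :
    HasDerivAt (fun s : ℝ => (s ^ ρ - A) / c) (ρ * t ^ (ρ - 1) / c) t :=
  ((hasDerivAt_rpow_const (Or.inl ht.ne')).sub_const A).div_const c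

theorem image_rpow_sub_div_Ioo {ρ a x : ℝ} (hρ : 0 < ρ) (ha : 0 ≤ a) (hax : a < x) :
    (fun t : ℝ => (t ^ ρ - a ^ ρ) / (x ^ ρ - a ^ ρ)) '' Ioo a x = Ioo 0 1 := by
  have hc : 0 < x ^ ρ - a ^ ρ := sub_pos.2 (rpow_lt_rpow ha hax hρ)
  rw [ContinuousOn.image_Ioo_of_strictMonoOn hax.le (by fun_prop (disch := exact hρ.le))
    ((strictMonoOn_rpow_sub_div hρ hc).mono fun t ht => ha.trans ht.1)]
  simp [hc.ne']

theorem abs_deriv_mul_rpow_sub_div {ρ a x p q t : ℝ} (hρ : 0 < ρ) (ha : 0 ≤ a) (hax : a < x)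
    (ht : t ∈ Ioo a x) :
    |ρ * t ^ (ρ - 1) / (x ^ ρ - a ^ ρ)| •
        (((t ^ ρ - a ^ ρ) / (x ^ ρ - a ^ ρ)) ^ p * (1 - (t ^ ρ - a ^ ρ) / (x ^ ρ - a ^ ρ)) ^ q)
      = ρ / (x ^ ρ - a ^ ρ) ^ (p + q + 1) *
        (t ^ (ρ - 1) * (t ^ ρ - a ^ ρ) ^ p * (x ^ ρ - t ^ ρ) ^ q) := by
  have ht0 : 0 < t := ha.trans_lt ht.1
  have hc : 0 < x ^ ρ - a ^ ρ := sub_pos.2 (rpow_lt_rpow ha hax hρ)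
  have hat : 0 ≤ t ^ ρ - a ^ ρ := sub_nonneg.2 (rpow_le_rpow ha ht.1.le hρ.le)
  have htx : 0 ≤ x ^ ρ - t ^ ρ := sub_nonneg.2 (rpow_le_rpow ht0.le ht.2.le hρ.le)
  have hsub : 1 - (t ^ ρ - a ^ ρ) / (x ^ ρ - a ^ ρ) = (x ^ ρ - t ^ ρ) / (x ^ ρ - a ^ ρ) := by
    field_simp; ring
  rw [hsub, smul_eq_mul, abs_of_pos (by positivity), div_rpow hat hc.le, div_rpow htx hc.le,
    rpow_add hc, rpow_add hc, rpow_one]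
  field_simp

theorem integrableOn_rpow_kernel {ρ a x p q : ℝ} (hρ : 0 < ρ) (ha : 0 ≤ a) (hax : a < x)
    (hp : -1 < p) (hq : -1 < q) :
    IntegrableOn (fun t => t ^ (ρ - 1) * (t ^ ρ - a ^ ρ) ^ p * (x ^ ρ - t ^ ρ) ^ q) (Ioo a x) := by
  have hc : 0 < x ^ ρ - a ^ ρ := sub_pos.2 (rpow_lt_rpow ha hax hρ)
  have hsubst := integrableOn_rpow_mul_one_sub_rpow hp hq
  rw [← image_rpow_sub_div_Ioo hρ ha hax, integrableOn_image_iff_integrableOn_abs_deriv_smul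
    measurableSet_Ioo
    (fun t ht => (hasDerivAt_rpow_sub_div (ha.trans_lt ht.1) _ _).hasDerivWithinAt)
    ((strictMonoOn_rpow_sub_div hρ hc).injOn.mono fun t ht => ha.trans ht.1.le)] at hsubst
  refine IntegrableOn.congr_fun (hsubst.const_mul ((x ^ ρ - a ^ ρ) ^ (p + q + 1) / ρ))
    (fun t ht => ?_) measurableSet_Ioo
  rw [abs_deriv_mul_rpow_sub_div hρ ha hax ht]
  field_simp

theorem integral_rpow_kernel {ρ a x p q : ℝ} (hρ : 0 < ρ) (ha : 0 ≤ a) (hax : a < x) :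
    ∫ t in Ioo a x, t ^ (ρ - 1) * (t ^ ρ - a ^ ρ) ^ p * (x ^ ρ - t ^ ρ) ^ q =
      (x ^ ρ - a ^ ρ) ^ (p + q + 1) / ρ * ∫ s in Ioo 0 1, s ^ p * (1 - s) ^ q := by
  have hc : 0 < x ^ ρ - a ^ ρ := sub_pos.2 (rpow_lt_rpow ha hax hρ)
  rw [← image_rpow_sub_div_Ioo hρ ha hax, integral_image_eq_integral_abs_deriv_smul
    measurableSet_Ioo
    (fun t ht => (hasDerivAt_rpow_sub_div (ha.trans_lt ht.1) _ _).hasDerivWithinAt)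
    ((strictMonoOn_rpow_sub_div hρ hc).injOn.mono fun t ht => ha.trans ht.1.le),
    setIntegral_congr_fun measurableSet_Ioo fun t ht => abs_deriv_mul_rpow_sub_div hρ ha hax ht,
    integral_const_mul]
  field_simp

theorem MemW.exists_norm_le {ρ γ a b : ℝ} {φ : ℝ → ℝ} (hφ : MemW ρ γ a b φ) (hρ : 0 < ρ)
    (ha : 0 ≤ a) : ∃ M, ∀ t ∈ Ioc a b, ‖φ t‖ ≤ M * (t ^ ρ - a ^ ρ) ^ (-γ) := by
  obtain ⟨h, hcont, hh⟩ := hφ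
  obtain ⟨M, hM⟩ := isCompact_Icc.exists_bound_of_continuousOn hcont
  refine ⟨M * ρ ^ γ, fun t ht => ?_⟩
  have hw : 0 < t ^ ρ - a ^ ρ := sub_pos.2 (rpow_lt_rpow ha ht.1 hρ)
  have hφt : φ t = ((t ^ ρ - a ^ ρ) / ρ) ^ (-γ) * h t := by
    rw [hh t ht, rpow_neg (by positivity), inv_mul_cancel_left₀ (by positivity)]
  calc ‖φ t‖ = ((t ^ ρ - a ^ ρ) / ρ) ^ (-γ) * ‖h t‖ := by
        rw [hφt, norm_mul, norm_of_nonneg (by positivity)]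
    _ ≤ ((t ^ ρ - a ^ ρ) / ρ) ^ (-γ) * M := by gcongr; exact hM t (Ioc_subset_Icc_self ht)
    _ = M * ρ ^ γ * (t ^ ρ - a ^ ρ) ^ (-γ) := by
        rw [div_rpow hw.le hρ.le, rpow_neg hρ.le, div_inv_eq_mul]; ring

theorem norm_igral_le {ρ α γ a x M : ℝ} {φ : ℝ → ℝ} (hρ : 0 < ρ) (ha : 0 ≤ a) (hax : a < x)
    (hα : 0 < α) (hγ : γ < 1) (hφ : ∀ t ∈ Ioc a x, ‖φ t‖ ≤ M * (t ^ ρ - a ^ ρ) ^ (-γ)) :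
    ‖igral ρ α a φ x‖ ≤ ρ ^ (1 - α) / Gamma α *
      (M * ((x ^ ρ - a ^ ρ) ^ (α - γ) / ρ * ∫ s in Ioo 0 1, s ^ (-γ) * (1 - s) ^ (α - 1))) := by
  have hkernel := integrableOn_rpow_kernel (p := -γ) (q := α - 1) hρ ha hax (by linarith)
    (by linarith)
  have hbound : ∀ t ∈ Ioc a x, ‖t ^ (ρ - 1) * φ t * (x ^ ρ - t ^ ρ) ^ (α - 1)‖ ≤
      M * (t ^ (ρ - 1) * (t ^ ρ - a ^ ρ) ^ (-γ) * (x ^ ρ - t ^ ρ) ^ (α - 1)) := by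
    intro t ht
    have ht0 : 0 < t := ha.trans_lt ht.1
    have htx : 0 ≤ x ^ ρ - t ^ ρ := sub_nonneg.2 (rpow_le_rpow ht0.le ht.2 hρ.le)
    rw [norm_mul, norm_mul, norm_of_nonneg (rpow_nonneg ht0.le _),
      norm_of_nonneg (rpow_nonneg htx _)]
    calc t ^ (ρ - 1) * ‖φ t‖ * (x ^ ρ - t ^ ρ) ^ (α - 1)
        ≤ t ^ (ρ - 1) * (M * (t ^ ρ - a ^ ρ) ^ (-γ)) * (x ^ ρ - t ^ ρ) ^ (α - 1) := by
          gcongr; exact hφ t ht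
      _ = _ := by ring
  have hintegral := intervalIntegral.norm_integral_le_of_norm_le hax.le
    (Eventually.of_forall hbound)
    ((intervalIntegrable_iff_integrableOn_Ioo_of_le hax.le).2 (hkernel.const_mul M))
  have hvalue : ∫ t in a..x, M * (t ^ (ρ - 1) * (t ^ ρ - a ^ ρ) ^ (-γ) * (x ^ ρ - t ^ ρ) ^ (α - 1))
      = M * ((x ^ ρ - a ^ ρ) ^ (α - γ) / ρ * ∫ s in Ioo 0 1, s ^ (-γ) * (1 - s) ^ (α - 1)) := by
    rw [intervalIntegral.integral_of_le hax.le, integral_Ioc_eq_integral_Ioo, integral_const_mul,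
      integral_rpow_kernel hρ ha hax, show -γ + (α - 1) + 1 = α - γ by ring]
  have hconst : 0 ≤ ρ ^ (1 - α) / Gamma α := by positivity [Gamma_pos_of_pos hα]
  rw [igral, if_neg hα.ne', norm_mul, norm_of_nonneg hconst]
  exact mul_le_mul_of_nonneg_left (hintegral.trans_eq hvalue) hconst

theorem igral_tendsto_zero_general (ρ a b α γ : ℝ) (φ : ℝ → ℝ) (ha : 0 < a) (hab : a < b)
    (hρ : 0 < ρ) (hγ1 : γ < 1) (hα : 0 < α) (hαγ : γ < α)
    (hφ : MemW ρ γ a b φ) :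
    Tendsto (igral ρ α a φ) (𝓝[>] a) (𝓝 0) := by
  obtain ⟨M, hM⟩ := hφ.exists_norm_le hρ ha.le
  set B := ∫ s in Ioo (0 : ℝ) 1, s ^ (-γ) * (1 - s) ^ (α - 1)
  have hbound : ∀ᶠ x in 𝓝[>] a, ‖igral ρ α a φ x‖ ≤
      ρ ^ (1 - α) / Gamma α * (M * ((x ^ ρ - a ^ ρ) ^ (α - γ) / ρ * B)) := by
    filter_upwards [Ioc_mem_nhdsGT hab] with x hx
    exact norm_igral_le hρ ha.le hx.1 hα hγ1 fun t ht => hM t ⟨ht.1, ht.2.trans hx.2⟩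
  have hcont : ContinuousAt
      (fun x : ℝ => ρ ^ (1 - α) / Gamma α * (M * ((x ^ ρ - a ^ ρ) ^ (α - γ) / ρ * B))) a := by
    fun_prop (disch := first | exact Or.inl ha.ne' | exact Or.inr (sub_pos.2 hαγ).le)
  refine squeeze_zero_norm' hbound ?_
  simpa [zero_rpow (sub_pos.2 hαγ).ne'] using hcont.tendsto.mono_left nhdsWithin_le_nhds

/-- The generalized fractional integral of a function in the weighted space
tends to zero at `a` when `α > γ`. -/
theorem igral_tendsto_zero (ρ a b α γ : ℝ) (φ : ℝ → ℝ) (ha : 0 < a) (hab : a < b)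
    (hρ : 0 < ρ) (hγ0 : 0 ≤ γ) (hγ1 : γ < 1) (hα : 0 < α) (hαγ : γ < α)
    (hφ : MemW ρ γ a b φ) :
    Tendsto (igral ρ α a φ) (𝓝[>] a) (𝓝 0) :=
  igral_tendsto_zero_general ρ a b α γ φ ha hab hρ hγ1 hα hαγ hφ
end

section
/- Let 0 ≤ μ₁ ≤ μ₂ < 1, 0 < a < b, ρ > 0. Then C_{μ₁,ρ}[a,b] embeds into C_{μ₂,ρ}[a,b], and for every f ∈ C_{μ₁,ρ}[a,b], ‖f‖_{C_{μ₂,ρ}} ≤ ((b^ρ - a^ρ)/ρ)^{μ₂-μ₁} ‖f‖_{C_{μ₁,ρ}}. -/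
open Real MeasureTheory Set Filter Topology

/-- Embedding of weighted spaces with norm bound. -/
theorem weighted_space_embedding (ρ a b μ₁ μ₂ : ℝ) (f : ℝ → ℝ)
    (hμ₁ : 0 ≤ μ₁) (hμ₁₂ : μ₁ ≤ μ₂) (hμ₂ : μ₂ < 1) (ha : 0 < a) (hab : a < b)
    (hρ : 0 < ρ) (hf : MemW ρ μ₁ a b f) :
    MemW ρ μ₂ a b f ∧
      wnorm ρ μ₂ a b f ≤ ((b ^ ρ - a ^ ρ) / ρ) ^ (μ₂ - μ₁) * wnorm ρ μ₁ a b f := by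

  obtain ⟨h, hc, hh⟩ := hf
  have hdiff : 0 ≤ μ₂ - μ₁ := by linarith
  -- basic positivity facts
  have hbase : ∀ x ∈ Ioc a b, 0 < (x ^ ρ - a ^ ρ) / ρ := by
    intro x hx
    have : a ^ ρ < x ^ ρ := Real.rpow_lt_rpow ha.le hx.1 hρ
    exact div_pos (by linarith) hρ
  have hbaseC : (0:ℝ) < (b ^ ρ - a ^ ρ) / ρ := hbase b ⟨hab, le_refl b⟩
  have hmono : ∀ x ∈ Ioc a b, (x ^ ρ - a ^ ρ) / ρ ≤ (b ^ ρ - a ^ ρ) / ρ := by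
    intro x hx
    have : x ^ ρ ≤ b ^ ρ := Real.rpow_le_rpow (ha.le.trans hx.1.le) hx.2 hρ.le
    have := hρ
    gcongr
  set C : ℝ := ((b ^ ρ - a ^ ρ) / ρ) ^ (μ₂ - μ₁) with hC
  have hCpos : 0 < C := Real.rpow_pos_of_pos hbaseC _
  have hsplit : ∀ x ∈ Ioc a b,
      ((x ^ ρ - a ^ ρ) / ρ) ^ μ₂ =
        ((x ^ ρ - a ^ ρ) / ρ) ^ (μ₂ - μ₁) * ((x ^ ρ - a ^ ρ) / ρ) ^ μ₁ := by
    intro x hx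
    rw [← Real.rpow_add (hbase x hx)]
    ring_nf
  -- boundedness of the μ₁-weighted function
  obtain ⟨M, hM⟩ := isCompact_Icc.exists_bound_of_continuousOn hc
  have hbdd : BddAbove ((fun x => |((x ^ ρ - a ^ ρ) / ρ) ^ μ₁ * f x|) '' Ioc a b) := by
    refine ⟨M, ?_⟩
    rintro y ⟨x, hx, rfl⟩
    have := hM x (Ioc_subset_Icc_self hx)
    show |((x ^ ρ - a ^ ρ) / ρ) ^ μ₁ * f x| ≤ M
    rw [← hh x hx]
    simpa using this
  have hle1 : ∀ x ∈ Ioc a b,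
      |((x ^ ρ - a ^ ρ) / ρ) ^ μ₁ * f x| ≤ wnorm ρ μ₁ a b f := by
    intro x hx
    exact le_csSup hbdd ⟨x, hx, rfl⟩
  have hn1 : 0 ≤ wnorm ρ μ₁ a b f :=
    (abs_nonneg _).trans (hle1 ((a+b)/2) ⟨by linarith, by linarith⟩)
  constructor
  · refine ⟨fun x => ((x ^ ρ - a ^ ρ) / ρ) ^ (μ₂ - μ₁) * h x, ?_, ?_⟩
    · apply ContinuousOn.mul ?_ hc
      apply ContinuousOn.rpow_const
      · exact (((continuous_id.rpow_const fun x => Or.inr hρ.le).sub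
          continuous_const).div_const ρ).continuousOn
      · intro x _; exact Or.inr hdiff
    · intro x hx
      show ((x ^ ρ - a ^ ρ) / ρ) ^ (μ₂ - μ₁) * h x = _
      rw [hh x hx, hsplit x hx, mul_assoc]
  · apply Real.sSup_le
    · rintro y ⟨x, hx, rfl⟩
      simp only
      rw [hsplit x hx, mul_assoc, abs_mul,
        abs_of_nonneg (Real.rpow_nonneg (hbase x hx).le _)]
      calc ((x ^ ρ - a ^ ρ) / ρ) ^ (μ₂ - μ₁) * |((x ^ ρ - a ^ ρ) / ρ) ^ μ₁ * f x|
          ≤ C * (wnorm ρ μ₁ a b f) := by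
            apply mul_le_mul ?_ (hle1 x hx) (abs_nonneg _) hCpos.le
            exact Real.rpow_le_rpow (hbase x hx).le (hmono x hx) hdiff
        _ = _ := rfl
    · positivity
end

section
/- For α > 0, 0 ≤ γ < 1, ρ > 0, the generalized fractional integral ρJ_{a+}^α maps the weighted space C_{γ,ρ}[a,b] into itself and is bounded: there is a constant K = (Γ(1-γ)/Γ(α+1-γ)) ((b^ρ-a^ρ)/ρ)^α such that ‖ρJ_{a+}^α φ‖_{C_{γ,ρ}} ≤ K ‖φ‖_{C_{γ,ρ}}. -/
/-!
Substituting `t ^ ρ = a ^ ρ + u (x ^ ρ - a ^ ρ)` turns `((x ^ ρ - a ^ ρ) / ρ) ^ γ · ρJ^α φ (x)` into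
`((x ^ ρ - a ^ ρ) / ρ) ^ α / Γ(α) · ∫₀¹ u ^ (-γ) (1 - u) ^ (α - 1) h(t(u)) du`, where `h` is the
continuous function representing `φ` in `C_{γ,ρ}`. The kernel is integrable because `γ < 1` and
`α > 0`, so dominated convergence gives continuity in `x`, and `|h| ≤ ‖φ‖` together with
`B(1 - γ, α) = Γ(1 - γ) Γ(α) / Γ(α + 1 - γ)` gives the bound.
-/

open Real MeasureTheory Set Filter Topology

lemma ofReal_rpow_mul_one_sub_rpow {s t u : ℝ} (hu : u ∈ Icc (0 : ℝ) 1) :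
    ((u ^ (s - 1) * (1 - u) ^ (t - 1) : ℝ) : ℂ)
      = (u : ℂ) ^ ((s : ℂ) - 1) * (1 - (u : ℂ)) ^ ((t : ℂ) - 1) := by
  rw [Complex.ofReal_mul, Complex.ofReal_cpow hu.1, Complex.ofReal_cpow (sub_nonneg.2 hu.2)]
  push_cast
  rfl

lemma intervalIntegrable_rpow_mul_one_sub_rpow {s t : ℝ} (hs : 0 < s) (ht : 0 < t) :
    IntervalIntegrable (fun u : ℝ => u ^ (s - 1) * (1 - u) ^ (t - 1)) volume 0 1 := by
  refine (intervalIntegrable_congr fun u hu => ?_).1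
    (Complex.betaIntegral_convergent (u := s) (v := t) hs ht).norm
  rw [uIoc_of_le zero_le_one] at hu
  rw [← ofReal_rpow_mul_one_sub_rpow (Ioc_subset_Icc_self hu), Complex.norm_real,
    Real.norm_of_nonneg
    (mul_nonneg (rpow_nonneg hu.1.le _) (rpow_nonneg (sub_nonneg.2 hu.2) _))]

lemma integral_rpow_mul_one_sub_rpow {s t : ℝ} (hs : 0 < s) (ht : 0 < t) :
    ∫ u in (0 : ℝ)..1, u ^ (s - 1) * (1 - u) ^ (t - 1)
      = Real.Gamma s * Real.Gamma t / Real.Gamma (s + t) := by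
  have hbeta : Complex.betaIntegral s t
      = ((∫ u in (0 : ℝ)..1, u ^ (s - 1) * (1 - u) ^ (t - 1) : ℝ) : ℂ) := by
    rw [Complex.betaIntegral, ← intervalIntegral.integral_ofReal]
    refine intervalIntegral.integral_congr fun u hu => ?_
    rw [uIcc_of_le zero_le_one] at hu
    exact (ofReal_rpow_mul_one_sub_rpow hu).symm
  have h := Complex.Gamma_mul_Gamma_eq_betaIntegral (s := s) (t := t) hs ht
  rw [hbeta, ← Complex.ofReal_add, Complex.Gamma_ofReal, Complex.Gamma_ofReal,
    Complex.Gamma_ofReal] at h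
  rw [eq_div_iff (Real.Gamma_pos_of_pos (add_pos hs ht)).ne']
  exact_mod_cast (h.trans (mul_comm _ _)).symm

open scoped Interval

theorem continuousOn_parametric_intervalIntegral_mul {X : Type*} [TopologicalSpace X]
    [FirstCountableTopology X] {s : Set X} (hs : IsCompact s) {k : ℝ → ℝ} {G : X → ℝ → ℝ}
    {c d : ℝ} (hk : IntervalIntegrable k volume c d)
    (hG : ContinuousOn (Function.uncurry G) (s ×ˢ [[c, d]])) :
    ContinuousOn (fun x => ∫ t in c..d, k t * G x t) s := by
  obtain ⟨C, hC⟩ := (hs.prod isCompact_uIcc).exists_bound_of_continuousOn hG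
  have hGx : ∀ x ∈ s, ContinuousOn (G x) [[c, d]] := fun x hx =>
    hG.comp (continuousOn_const.prodMk continuousOn_id) fun t ht => ⟨hx, ht⟩
  intro x₀ hx₀
  refine intervalIntegral.continuousWithinAt_of_dominated_interval
    (bound := fun t => ‖k t‖ * C) ?_ ?_ (hk.norm.mul_const C) ?_
  · filter_upwards [self_mem_nhdsWithin] with x hx
    exact hk.def'.aestronglyMeasurable.mul
      (((hGx x hx).mono uIoc_subset_uIcc).aestronglyMeasurable measurableSet_uIoc)
  · filter_upwards [self_mem_nhdsWithin] with x hx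
    refine ae_of_all _ fun t ht => ?_
    rw [norm_mul]
    exact mul_le_mul_of_nonneg_left (hC (x, t) ⟨hx, uIoc_subset_uIcc ht⟩) (norm_nonneg _)
  · refine ae_of_all _ fun t ht => continuousWithinAt_const.mul ?_
    exact (hG (x₀, t) ⟨hx₀, uIoc_subset_uIcc ht⟩).comp (f := fun x => (x, t))
      (continuousWithinAt_id.prodMk continuousWithinAt_const) fun x hx => ⟨hx, uIoc_subset_uIcc ht⟩

noncomputable def katSubst (ρ a x u : ℝ) : ℝ :=
  (a ^ ρ + u * (x ^ ρ - a ^ ρ)) ^ ρ⁻¹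

section katSubst

variable {ρ a x u : ℝ}

lemma continuous_katSubst (hρ : 0 ≤ ρ) :
    Continuous fun p : ℝ × ℝ => katSubst ρ a p.1 p.2 :=
  (continuous_rpow_const (inv_nonneg.2 hρ)).comp <| continuous_const.add <|
    continuous_snd.mul (((continuous_rpow_const hρ).comp continuous_fst).sub continuous_const)

lemma katSubst_mem_Icc (hρ : 0 < ρ) (ha : 0 ≤ a) (hax : a ≤ x) (hu : u ∈ Icc (0 : ℝ) 1) :
    katSubst ρ a x u ∈ Icc a x := by
  have hd : 0 ≤ x ^ ρ - a ^ ρ := sub_nonneg.2 (rpow_le_rpow ha hax hρ.le)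
  have hB : 0 ≤ a ^ ρ + u * (x ^ ρ - a ^ ρ) := by have := rpow_nonneg ha ρ; nlinarith [hu.1]
  constructor
  · rw [katSubst, le_rpow_inv_iff_of_pos ha hB hρ]; nlinarith [hu.1]
  · rw [katSubst, rpow_inv_le_iff_of_pos hB (ha.trans hax) hρ]; nlinarith [hu.1, hu.2]

lemma katSubst_mem_Ioc (hρ : 0 < ρ) (ha : 0 ≤ a) (hax : a < x) (hu : u ∈ Ioc (0 : ℝ) 1) :
    katSubst ρ a x u ∈ Ioc a x := by
  have hd : 0 < x ^ ρ - a ^ ρ := sub_pos.2 (rpow_lt_rpow ha hax hρ)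
  refine ⟨?_, (katSubst_mem_Icc hρ ha hax.le (Ioc_subset_Icc_self hu)).2⟩
  rw [katSubst,
    lt_rpow_inv_iff_of_pos ha (add_nonneg (rpow_nonneg ha ρ) (mul_nonneg hu.1.le hd.le)) hρ]
  nlinarith [hu.1]

lemma katSubst_rpow (hρ : 0 < ρ) (ha : 0 ≤ a) (hax : a ≤ x) (hu : 0 ≤ u) :
    katSubst ρ a x u ^ ρ = a ^ ρ + u * (x ^ ρ - a ^ ρ) :=
  rpow_inv_rpow (add_nonneg (rpow_nonneg ha ρ)
    (mul_nonneg hu (sub_nonneg.2 (rpow_le_rpow ha hax hρ.le)))) hρ.ne'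

lemma strictMonoOn_katSubst (hρ : 0 < ρ) (ha : 0 ≤ a) (hax : a < x) :
    StrictMonoOn (katSubst ρ a x) (Ici 0) := by
  have hd : 0 < x ^ ρ - a ^ ρ := sub_pos.2 (rpow_lt_rpow ha hax hρ)
  intro u hu v _ huv
  exact rpow_lt_rpow (by have := hu.out; positivity) (by nlinarith) (inv_pos.2 hρ)

lemma katSubst_image_Ioo (hρ : 0 < ρ) (ha : 0 ≤ a) (hax : a < x) :
    katSubst ρ a x '' Ioo 0 1 = Ioo a x := by
  have hd : 0 < x ^ ρ - a ^ ρ := sub_pos.2 (rpow_lt_rpow ha hax hρ)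
  ext t
  constructor
  · rintro ⟨u, hu, rfl⟩
    refine ⟨(katSubst_mem_Ioc hρ ha hax (Ioo_subset_Ioc_self hu)).1, ?_⟩
    calc katSubst ρ a x u < katSubst ρ a x 1 :=
          strictMonoOn_katSubst hρ ha hax hu.1.le (mem_Ici.2 zero_le_one) hu.2
      _ = x := by simp [katSubst, rpow_rpow_inv (ha.trans hax.le) hρ.ne']
  · rintro ⟨hat, htx⟩
    have hat' := rpow_lt_rpow ha hat hρ
    have htx' := rpow_lt_rpow (ha.trans hat.le) htx hρ
    refine ⟨(t ^ ρ - a ^ ρ) / (x ^ ρ - a ^ ρ), ⟨by bound, by rw [div_lt_one hd]; linarith⟩, ?_⟩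
    rw [katSubst, div_mul_cancel₀ _ hd.ne', add_sub_cancel, rpow_rpow_inv (ha.trans hat.le) hρ.ne']

lemma hasDerivAt_katSubst (hρ : ρ ≠ 0) (hB : 0 < a ^ ρ + u * (x ^ ρ - a ^ ρ)) :
    HasDerivAt (katSubst ρ a x) ((x ^ ρ - a ^ ρ) / ρ * katSubst ρ a x u ^ (1 - ρ)) u := by
  have h := (((hasDerivAt_id u).mul_const (x ^ ρ - a ^ ρ)).const_add (a ^ ρ)).rpow_const
    (p := ρ⁻¹) (Or.inl hB.ne')
  refine h.congr_deriv ?_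
  rw [katSubst, ← rpow_mul hB.le, inv_mul_eq_div, sub_div 1 ρ ρ, div_self hρ, one_div, id,
    one_mul, div_eq_mul_inv]

end katSubst

theorem igral_eq_integral_katSubst {ρ α a x : ℝ} (hα : α ≠ 0) (hρ : 0 < ρ) (ha : 0 ≤ a)
    (hax : a < x) (φ : ℝ → ℝ) :
    igral ρ α a φ x = ((x ^ ρ - a ^ ρ) / ρ) ^ α / Real.Gamma α *
      ∫ u in (0 : ℝ)..1, (1 - u) ^ (α - 1) * φ (katSubst ρ a x u) := by
  set X := (x ^ ρ - a ^ ρ) / ρ with hX_def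
  have hd : x ^ ρ - a ^ ρ = ρ * X := by rw [hX_def, mul_div_cancel₀ _ hρ.ne']
  have hX : 0 < X := div_pos (sub_pos.2 (rpow_lt_rpow ha hax hρ)) hρ
  have hB : ∀ u ∈ Ioo (0 : ℝ) 1, 0 < a ^ ρ + u * (x ^ ρ - a ^ ρ) := fun u hu =>
    add_pos_of_nonneg_of_pos (rpow_nonneg ha ρ) (mul_pos hu.1 (hd ▸ mul_pos hρ hX))
  -- the Jacobian `X * t ^ (1 - ρ)` cancels the weight `t ^ (ρ - 1)`
  have hpt : ∀ u ∈ Ioo (0 : ℝ) 1,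
      ρ ^ (1 - α) * (|X * katSubst ρ a x u ^ (1 - ρ)| • (katSubst ρ a x u ^ (ρ - 1) *
        φ (katSubst ρ a x u) * (x ^ ρ - katSubst ρ a x u ^ ρ) ^ (α - 1)))
      = X ^ α * ((1 - u) ^ (α - 1) * φ (katSubst ρ a x u)) := by
    intro u hu
    set T := katSubst ρ a x u
    have hT : 0 < T := ha.trans_lt (katSubst_mem_Ioc hρ ha hax (Ioo_subset_Ioc_self hu)).1
    have hxT : x ^ ρ - T ^ ρ = (1 - u) * ρ * X := by
      rw [katSubst_rpow hρ ha hax.le hu.1.le]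
      linear_combination (1 - u) * hd
    have hTT : T ^ (1 - ρ) * T ^ (ρ - 1) = 1 := by rw [← rpow_add hT]; simp
    have hρρ : ρ ^ (1 - α) * ρ ^ (α - 1) = 1 := by rw [← rpow_add hρ]; simp
    have hXX : X * X ^ (α - 1) = X ^ α := by rw [rpow_sub_one hX.ne']; field_simp
    rw [abs_of_pos (by positivity), smul_eq_mul, hxT,
      mul_rpow (mul_nonneg (sub_nonneg.2 hu.2.le) hρ.le) hX.le,
      mul_rpow (sub_nonneg.2 hu.2.le) hρ.le]
    linear_combination (1 - u) ^ (α - 1) * φ T *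
      (X * X ^ (α - 1) * T ^ (1 - ρ) * T ^ (ρ - 1) * hρρ + X * X ^ (α - 1) * hTT + hXX)
  rw [igral, if_neg hα, intervalIntegral.integral_of_le hax.le, integral_Ioc_eq_integral_Ioo,
    ← katSubst_image_Ioo hρ ha hax,
    integral_image_eq_integral_abs_deriv_smul measurableSet_Ioo
      (fun u hu => (hasDerivAt_katSubst hρ.ne' (hB u hu)).hasDerivWithinAt)
      ((strictMonoOn_katSubst hρ ha hax).injOn.mono fun u hu => mem_Ici.2 hu.1.le),
    intervalIntegral.integral_of_le zero_le_one, integral_Ioc_eq_integral_Ioo,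
    div_mul_eq_mul_div, div_mul_eq_mul_div, ← integral_const_mul, ← integral_const_mul,
    setIntegral_congr_fun measurableSet_Ioo hpt]

noncomputable def weightedIgral (ρ α γ a : ℝ) (h : ℝ → ℝ) (x : ℝ) : ℝ :=
  ((x ^ ρ - a ^ ρ) / ρ) ^ α / Real.Gamma α *
    ∫ u in (0 : ℝ)..1, u ^ (-γ) * (1 - u) ^ (α - 1) * h (katSubst ρ a x u)

section weightedIgral

variable {ρ α γ a b x : ℝ} {φ h : ℝ → ℝ}

lemma rpow_mul_igral_eq_weightedIgral (hα : α ≠ 0) (hρ : 0 < ρ) (ha : 0 ≤ a) (hax : a < x)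
    (hφ : ∀ t ∈ Ioc a x, h t = ((t ^ ρ - a ^ ρ) / ρ) ^ γ * φ t) :
    ((x ^ ρ - a ^ ρ) / ρ) ^ γ * igral ρ α a φ x = weightedIgral ρ α γ a h x := by
  have hX : 0 < (x ^ ρ - a ^ ρ) / ρ := div_pos (sub_pos.2 (rpow_lt_rpow ha hax hρ)) hρ
  rw [igral_eq_integral_katSubst hα hρ ha hax, weightedIgral, mul_left_comm,
    ← intervalIntegral.integral_const_mul]
  congr 1
  refine intervalIntegral.integral_congr_ae (ae_of_all _ fun u hu => ?_)
  rw [uIoc_of_le zero_le_one] at hu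
  have hw : (katSubst ρ a x u ^ ρ - a ^ ρ) / ρ = u * ((x ^ ρ - a ^ ρ) / ρ) := by
    rw [katSubst_rpow hρ ha hax.le hu.1.le]
    ring
  rw [hφ _ (katSubst_mem_Ioc hρ ha hax hu), hw, mul_rpow hu.1.le hX.le, rpow_neg hu.1.le]
  have : u ^ γ ≠ 0 := (rpow_pos_of_pos hu.1 γ).ne'
  field_simp

lemma continuousOn_weightedIgral (hα : 0 < α) (hγ : γ < 1) (hρ : 0 < ρ) (ha : 0 ≤ a)
    (hh : ContinuousOn h (Icc a b)) : ContinuousOn (weightedIgral ρ α γ a h) (Icc a b) := by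
  have hk := intervalIntegrable_rpow_mul_one_sub_rpow (sub_pos.2 hγ) hα
  rw [sub_sub_cancel_left] at hk
  refine ContinuousOn.mul ?_ (continuousOn_parametric_intervalIntegral_mul isCompact_Icc hk ?_)
  · exact ((continuous_rpow_const hα.le).comp (((continuous_rpow_const hρ.le).sub
      continuous_const).div_const ρ)).continuousOn.div_const _
  · refine hh.comp (continuous_katSubst hρ.le).continuousOn fun p hp => ?_
    rw [mem_prod, uIcc_of_le zero_le_one] at hp
    exact Icc_subset_Icc_right hp.1.2 (katSubst_mem_Icc hρ ha hp.1.1 hp.2)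

lemma abs_weightedIgral_le (hα : 0 < α) (hγ : γ < 1) (hρ : 0 < ρ) (ha : 0 ≤ a) (hax : a < x)
    {M : ℝ} (hM : ∀ t ∈ Ioc a x, |h t| ≤ M) :
    |weightedIgral ρ α γ a h x|
      ≤ Real.Gamma (1 - γ) / Real.Gamma (α + 1 - γ) * ((x ^ ρ - a ^ ρ) / ρ) ^ α * M := by
  have hk := intervalIntegrable_rpow_mul_one_sub_rpow (sub_pos.2 hγ) hα
  have hbeta := integral_rpow_mul_one_sub_rpow (sub_pos.2 hγ) hα
  rw [sub_sub_cancel_left] at hk hbeta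
  have hX : 0 ≤ (x ^ ρ - a ^ ρ) / ρ :=
    div_nonneg (sub_nonneg.2 (rpow_le_rpow ha hax.le hρ.le)) hρ.le
  have hΓ := Real.Gamma_pos_of_pos hα
  have hI : |∫ u in (0 : ℝ)..1, u ^ (-γ) * (1 - u) ^ (α - 1) * h (katSubst ρ a x u)|
      ≤ M * (Real.Gamma (1 - γ) * Real.Gamma α / Real.Gamma (1 - γ + α)) := by
    rw [← hbeta, ← intervalIntegral.integral_const_mul, ← Real.norm_eq_abs]
    refine intervalIntegral.norm_integral_le_of_norm_le zero_le_one
      (ae_of_all _ fun u hu => ?_) (hk.const_mul M)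
    have hkernel : 0 ≤ u ^ (-γ) * (1 - u) ^ (α - 1) :=
      mul_nonneg (rpow_nonneg hu.1.le _) (rpow_nonneg (sub_nonneg.2 hu.2) _)
    rw [norm_mul, Real.norm_of_nonneg hkernel, mul_comm M]
    exact mul_le_mul_of_nonneg_left (hM _ (katSubst_mem_Ioc hρ ha hax hu)) hkernel
  rw [weightedIgral, abs_mul, abs_of_nonneg (div_nonneg (rpow_nonneg hX _) hΓ.le)]
  calc _ ≤ ((x ^ ρ - a ^ ρ) / ρ) ^ α / Real.Gamma α *
        (M * (Real.Gamma (1 - γ) * Real.Gamma α / Real.Gamma (1 - γ + α))) :=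
        mul_le_mul_of_nonneg_left hI (div_nonneg (rpow_nonneg hX _) hΓ.le)
    _ = _ := by rw [show 1 - γ + α = α + 1 - γ by ring]; field_simp

lemma abs_le_wnorm (hh : ContinuousOn h (Icc a b))
    (hφ : ∀ x ∈ Ioc a b, h x = ((x ^ ρ - a ^ ρ) / ρ) ^ γ * φ x) (hx : x ∈ Ioc a b) :
    |h x| ≤ wnorm ρ γ a b φ := by
  obtain ⟨C, hC⟩ := isCompact_Icc.exists_bound_of_continuousOn hh
  rw [hφ x hx]
  refine le_csSup ⟨C, forall_mem_image.2 fun t ht => ?_⟩ (mem_image_of_mem _ hx)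
  rw [← hφ t ht]
  exact hC t (Ioc_subset_Icc_self ht)

end weightedIgral

theorem igral_bounded_on_weighted_space_general (ρ a b α γ : ℝ) (hα : 0 < α)
    (hγ1 : γ < 1) (hρ : 0 < ρ) (ha : 0 < a) (hab : a < b) :
    ∀ φ : ℝ → ℝ, MemW ρ γ a b φ →
      MemW ρ γ a b (igral ρ α a φ) ∧
        wnorm ρ γ a b (igral ρ α a φ) ≤
          Real.Gamma (1 - γ) / Real.Gamma (α + 1 - γ) *
            ((b ^ ρ - a ^ ρ) / ρ) ^ α * wnorm ρ γ a b φ := by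
  rintro φ ⟨h, hh, hφ⟩
  have hrepr : ∀ x ∈ Ioc a b,
      ((x ^ ρ - a ^ ρ) / ρ) ^ γ * igral ρ α a φ x = weightedIgral ρ α γ a h x := fun x hx =>
    rpow_mul_igral_eq_weightedIgral hα.ne' hρ ha.le hx.1 fun t ht =>
      hφ t (Ioc_subset_Ioc_right hx.2 ht)
  have hW := (abs_nonneg _).trans (abs_le_wnorm hh hφ (right_mem_Ioc.2 hab))
  have hΓ : 0 ≤ Real.Gamma (1 - γ) / Real.Gamma (α + 1 - γ) :=
    div_nonneg (Real.Gamma_pos_of_pos (by linarith)).le (Real.Gamma_pos_of_pos (by linarith)).le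
  have hw : ∀ x ∈ Ioc a b, 0 ≤ (x ^ ρ - a ^ ρ) / ρ := fun x hx =>
    div_nonneg (sub_nonneg.2 (rpow_le_rpow ha.le hx.1.le hρ.le)) hρ.le
  have hK := mul_nonneg hΓ (rpow_nonneg (hw b (right_mem_Ioc.2 hab)) α)
  refine ⟨⟨weightedIgral ρ α γ a h, continuousOn_weightedIgral hα hγ1 hρ ha.le hh,
    fun x hx => (hrepr x hx).symm⟩,
    Real.sSup_le (forall_mem_image.2 fun x hx => ?_) (mul_nonneg hK hW)⟩
  rw [hrepr x hx]
  refine (abs_weightedIgral_le hα hγ1 hρ ha.le hx.1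
    fun t ht => abs_le_wnorm hh hφ (Ioc_subset_Ioc_right hx.2 ht)).trans ?_
  gcongr
  exacts [hw x hx, ha.le.trans hx.1.le, hx.2]

/-- The generalized fractional integral is a bounded map of the weighted space
into itself. -/
theorem igral_bounded_on_weighted_space (ρ a b α γ : ℝ) (hα : 0 < α)
    (hγ0 : 0 ≤ γ) (hγ1 : γ < 1) (hρ : 0 < ρ) (ha : 0 < a) (hab : a < b) :
    ∀ φ : ℝ → ℝ, MemW ρ γ a b φ →
      MemW ρ γ a b (igral ρ α a φ) ∧
        wnorm ρ γ a b (igral ρ α a φ) ≤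
          Real.Gamma (1 - γ) / Real.Gamma (α + 1 - γ) *
            ((b ^ ρ - a ^ ρ) / ρ) ^ α * wnorm ρ γ a b φ :=
  igral_bounded_on_weighted_space_general ρ a b α γ hα hγ1 hρ ha hab
end

section
/- Let 0 < α < 1, 0 ≤ β ≤ 1, γ = α + β(1−α), ρ > 0. For φ with ρD_{a+}^{α,β} φ well-defined and regular enough, ρJ_{a+}^{γ}(ρD_{a+}^{γ} φ) = ρJ_{a+}^{α}(ρD_{a+}^{α,β} φ) on (a,b]. -/
open Real MeasureTheory Set Filter Topology

/-! The substitution `u = t ^ ρ` turns the Katugampola integral `ρJ^α_{a+} φ (x)` into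
`ρ^{-α} J^α_{a^ρ+} (φ ∘ (·)^{1/ρ}) (x^ρ)`, with `J` the Riemann–Liouville integral, so the
semigroup law `ρJ^α ρJ^μ = ρJ^{α+μ}` reduces to the Riemann–Liouville one: Fubini plus the Beta
integral. Since `(1 - β)(1 - α) = 1 - γ`, we have `ρD^{α,β} φ = ρJ^{β(1-α)} ρD^γ φ`, and the claim
is the semigroup law with `μ = β(1 - α)`, `α + μ = γ`. Membership of `ρD^γ φ` in `C_{1-γ}` bounds
it by `C (u - a^ρ)^{γ-1}` in the new variable, which is what makes Fubini applicable. -/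

lemma integral_rpow_mul_sub_rpow {p q c : ℝ} (hp : 0 < p) (hq : 0 < q) (hc : 0 < c) :
    ∫ x in (0:ℝ)..c, x ^ (p - 1) * (c - x) ^ (q - 1) =
      Gamma p * Gamma q / Gamma (p + q) * c ^ (p + q - 1) := by
  have hpq : (0:ℝ) < p + q := by linarith
  have hB := Complex.Gamma_mul_Gamma_eq_betaIntegral (s := p) (t := q)
    (by simpa using hp) (by simpa using hq)
  have hscaled := Complex.betaIntegral_scaled (p : ℂ) q hc
  apply Complex.ofReal_injective
  rw [← intervalIntegral.integral_ofReal]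
  have hcongr : ∫ x in (0:ℝ)..c, ((x ^ (p - 1) * (c - x) ^ (q - 1) : ℝ) : ℂ) =
      ∫ x in (0:ℝ)..c, (x : ℂ) ^ ((p : ℂ) - 1) * ((c : ℂ) - x) ^ ((q : ℂ) - 1) := by
    refine intervalIntegral.integral_congr fun x hx => ?_
    rw [uIcc_of_le hc.le] at hx
    push_cast [Complex.ofReal_cpow hx.1, Complex.ofReal_cpow (sub_nonneg.2 hx.2)]
    rfl
  rw [hcongr, hscaled]
  have hΓ : Complex.Gamma (p + q) ≠ 0 := Complex.Gamma_ne_zero_of_re_pos (by simpa using hpq)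
  rw [← Complex.ofReal_add, Complex.Gamma_ofReal] at hB hΓ
  rw [Complex.Gamma_ofReal, Complex.Gamma_ofReal] at hB
  push_cast [Complex.ofReal_cpow hc.le, Complex.Gamma_ofReal]
  rw [hB, mul_div_cancel_left₀ _ hΓ, mul_comm]

lemma integral_Ioo_sub_rpow_mul_sub_rpow {p q v w : ℝ} (hp : 0 < p) (hq : 0 < q) (hvw : v < w) :
    ∫ u in Ioo v w, (u - v) ^ (p - 1) * (w - u) ^ (q - 1) =
      Gamma p * Gamma q / Gamma (p + q) * (w - v) ^ (p + q - 1) := by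
  rw [← integral_Ioc_eq_integral_Ioo, ← intervalIntegral.integral_of_le hvw.le,
    ← integral_rpow_mul_sub_rpow hp hq (sub_pos.2 hvw), ← sub_self v,
    ← intervalIntegral.integral_comp_sub_right]
  simp only [sub_sub_sub_cancel_right]

lemma integral_Ioo_sub_rpow_mul_sub_rpow_pos {p q v w : ℝ} (hp : 0 < p) (hq : 0 < q)
    (hvw : v < w) : 0 < ∫ u in Ioo v w, (u - v) ^ (p - 1) * (w - u) ^ (q - 1) := by
  rw [integral_Ioo_sub_rpow_mul_sub_rpow hp hq hvw]
  have := Gamma_pos_of_pos hp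
  have := Gamma_pos_of_pos hq
  have := Gamma_pos_of_pos (add_pos hp hq)
  have := rpow_pos_of_pos (sub_pos.2 hvw) (p + q - 1)
  positivity

lemma integrableOn_Ioo_sub_rpow_mul_sub_rpow {p q v w : ℝ} (hp : 0 < p) (hq : 0 < q) :
    IntegrableOn (fun u => (u - v) ^ (p - 1) * (w - u) ^ (q - 1)) (Ioo v w) := by
  rcases lt_or_ge v w with hvw | hwv
  -- a non-integrable function has Bochner integral `0`
  · exact .of_integral_ne_zero (integral_Ioo_sub_rpow_mul_sub_rpow_pos hp hq hvw).ne'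
  · simp [Ioo_eq_empty hwv.not_gt]

noncomputable def rlIntegral (α A : ℝ) (g : ℝ → ℝ) (X : ℝ) : ℝ :=
  (Gamma α)⁻¹ * ∫ u in Ioo A X, (X - u) ^ (α - 1) * g u

lemma rlIntegral_congr {α A X : ℝ} {g g' : ℝ → ℝ} (h : ∀ u ∈ Ioo A X, g u = g' u) :
    rlIntegral α A g X = rlIntegral α A g' X := by
  rw [rlIntegral, rlIntegral, setIntegral_congr_fun measurableSet_Ioo fun u hu => by rw [h u hu]]

lemma rlIntegral_const_mul (α A c X : ℝ) (g : ℝ → ℝ) :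
    rlIntegral α A (fun u => c * g u) X = c * rlIntegral α A g X := by
  simp only [rlIntegral, mul_left_comm _ c, integral_const_mul]

/-- The kernel of `rlIntegral α A (rlIntegral μ A g) X` in the variables `(u, v)`. -/
noncomputable def rlCompKernel (α μ X : ℝ) : ℝ × ℝ → ℝ :=
  {p | p.2 < p.1 ∧ p.1 < X}.indicator fun p => (p.1 - p.2) ^ (μ - 1) * (X - p.1) ^ (α - 1)

section rlCompKernel

variable {α μ A X : ℝ}

lemma measurable_rlCompKernel : Measurable (rlCompKernel α μ X) :=
  Measurable.indicator (by fun_prop)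
    ((measurableSet_lt measurable_snd measurable_fst).inter
      (measurableSet_lt measurable_fst measurable_const))

lemma rlCompKernel_nonneg (p : ℝ × ℝ) : 0 ≤ rlCompKernel α μ X p :=
  indicator_nonneg (fun _ hp => mul_nonneg (rpow_nonneg (sub_pos.2 hp.1).le _)
    (rpow_nonneg (sub_pos.2 hp.2).le _)) p

lemma integral_rlCompKernel_fst (hα : 0 < α) (hμ : 0 < μ) {v : ℝ} (hv : v ∈ Ioo A X) :
    ∫ u in Ioo A X, rlCompKernel α μ X (u, v) =
      Gamma μ * Gamma α / Gamma (μ + α) * (X - v) ^ (μ + α - 1) := by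
  have hslice : (fun u => rlCompKernel α μ X (u, v)) =
      (Ioo v X).indicator fun u => (u - v) ^ (μ - 1) * (X - u) ^ (α - 1) := rfl
  rw [hslice, integral_indicator measurableSet_Ioo, Measure.restrict_restrict measurableSet_Ioo,
    Ioo_inter_Ioo, max_eq_left hv.1.le, min_self,
    integral_Ioo_sub_rpow_mul_sub_rpow hμ hα hv.2]

lemma integral_rlCompKernel_snd {u : ℝ} (hu : u < X) (g : ℝ → ℝ) :
    ∫ v in Ioo A X, rlCompKernel α μ X (u, v) * g v =
      (X - u) ^ (α - 1) * ∫ v in Ioo A u, (u - v) ^ (μ - 1) * g v := by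
  have hslice : (fun v => rlCompKernel α μ X (u, v) * g v) =
      (Iio u).indicator fun v => (X - u) ^ (α - 1) * ((u - v) ^ (μ - 1) * g v) := by
    ext v
    by_cases hvu : v < u <;> simp [rlCompKernel, indicator, hvu, hu]
    ring
  rw [hslice, integral_indicator measurableSet_Iio, Measure.restrict_restrict measurableSet_Iio,
    Iio_inter_Ioo, min_eq_left hu.le, integral_const_mul]

end rlCompKernel

theorem rlIntegral_rlIntegral {α μ κ A X C : ℝ} {g : ℝ → ℝ} (hα : 0 < α) (hμ : 0 < μ)
    (hκ : 0 < κ) (hg : AEStronglyMeasurable g (volume.restrict (Ioo A X)))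
    (hgC : ∀ v ∈ Ioo A X, |g v| ≤ C * (v - A) ^ (κ - 1)) :
    rlIntegral α A (rlIntegral μ A g) X = rlIntegral (α + μ) A g X := by
  set ν := volume.restrict (Ioo A X)
  set B := Gamma μ * Gamma α / Gamma (μ + α) with hB
  set F : ℝ × ℝ → ℝ := fun p => rlCompKernel α μ X p * g p.2
  have hB0 : 0 < B := by
    have := Gamma_pos_of_pos hμ
    have := Gamma_pos_of_pos hα
    have := Gamma_pos_of_pos (add_pos hμ hα)
    positivity
  have hfiber (h : ℝ → ℝ) :
      ∀ᵐ v ∂ν, ∫ u, rlCompKernel α μ X (u, v) * h v ∂ν = B * ((X - v) ^ (μ + α - 1) * h v) := by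
    filter_upwards [ae_restrict_mem measurableSet_Ioo] with v hv
    rw [integral_mul_const, integral_rlCompKernel_fst hα hμ hv, mul_assoc]
  have hF : Integrable F (ν.prod ν) := by
    have hFm : AEStronglyMeasurable F (ν.prod ν) :=
      measurable_rlCompKernel.aestronglyMeasurable.mul hg.comp_snd
    refine (integrable_prod_iff' hFm).2 ⟨?_, ?_⟩
    · filter_upwards [ae_restrict_mem measurableSet_Ioo] with v hv
      refine (Integrable.of_integral_ne_zero ?_).mul_const (g v)
      rw [integral_rlCompKernel_fst hα hμ hv]
      exact (mul_pos hB0 (rpow_pos_of_pos (sub_pos.2 hv.2) _)).ne'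
    · have hnorm : (fun v => ∫ u, ‖F (u, v)‖ ∂ν) =ᵐ[ν]
          fun v => B * ((X - v) ^ (μ + α - 1) * |g v|) := by
        filter_upwards [hfiber (|g ·|)] with v hv
        simpa only [F, norm_mul, Real.norm_eq_abs, abs_of_nonneg (rlCompKernel_nonneg _)] using hv
      refine Integrable.congr ?_ hnorm.symm
      refine Integrable.mono'
        ((integrableOn_Ioo_sub_rpow_mul_sub_rpow hκ (add_pos hμ hα)).const_mul (B * C)) ?_ ?_
      · exact aestronglyMeasurable_const.mul
          ((by fun_prop : Measurable fun v : ℝ => (X - v) ^ (μ + α - 1)).aestronglyMeasurable.mul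
            hg.norm)
      · filter_upwards [ae_restrict_mem measurableSet_Ioo] with v hv
        have hXv : 0 ≤ (X - v) ^ (μ + α - 1) := rpow_nonneg (sub_pos.2 hv.2).le _
        rw [Real.norm_eq_abs, abs_of_nonneg (by positivity)]
        calc B * ((X - v) ^ (μ + α - 1) * |g v|)
            ≤ B * ((X - v) ^ (μ + α - 1) * (C * (v - A) ^ (κ - 1))) := by gcongr; exact hgC v hv
          _ = B * C * ((v - A) ^ (κ - 1) * (X - v) ^ (μ + α - 1)) := by ring
  have hinner : ∀ u ∈ Ioo A X,
      (X - u) ^ (α - 1) * rlIntegral μ A g u = (Gamma μ)⁻¹ * ∫ v, F (u, v) ∂ν := by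
    intro u hu
    rw [integral_rlCompKernel_snd hu.2, rlIntegral]
    ring
  calc rlIntegral α A (rlIntegral μ A g) X
      = (Gamma α)⁻¹ * (Gamma μ)⁻¹ * ∫ u, ∫ v, F (u, v) ∂ν ∂ν := by
        rw [rlIntegral, setIntegral_congr_fun measurableSet_Ioo hinner, integral_const_mul,
          mul_assoc]
    _ = (Gamma α)⁻¹ * (Gamma μ)⁻¹ * ∫ v, ∫ u, F (u, v) ∂ν ∂ν := by
        rw [integral_integral_swap (f := fun u v => F (u, v)) hF]
    _ = (Gamma α)⁻¹ * (Gamma μ)⁻¹ * (B * ∫ v, (X - v) ^ (μ + α - 1) * g v ∂ν) := by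
        rw [integral_congr_ae (hfiber g), integral_const_mul]
    _ = rlIntegral (α + μ) A g X := by
        have := Gamma_pos_of_pos hμ
        have := Gamma_pos_of_pos hα
        rw [rlIntegral, hB, add_comm α μ]
        field_simp
        rfl

lemma image_rpow_Ioo {ρ a x : ℝ} (hρ : 0 < ρ) (ha : 0 ≤ a) (hax : a ≤ x) :
    (fun t : ℝ => t ^ ρ) '' Ioo a x = Ioo (a ^ ρ) (x ^ ρ) :=
  ContinuousOn.image_Ioo_of_strictMonoOn hax (continuous_rpow_const hρ.le).continuousOn
    ((strictMonoOn_rpow_Ici_of_exponent_pos hρ).mono fun _ ht => ha.trans ht.1)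

lemma rpow_inv_mem_Ioo {ρ a x v : ℝ} (hρ : 0 < ρ) (ha : 0 ≤ a) (hax : a ≤ x)
    (hv : v ∈ Ioo (a ^ ρ) (x ^ ρ)) : v ^ ρ⁻¹ ∈ Ioo a x := by
  rw [← image_rpow_Ioo hρ ha hax] at hv
  obtain ⟨t, ht, rfl⟩ := hv
  rwa [rpow_rpow_inv (ha.trans ht.1.le) hρ.ne']

theorem igral_eq_rpow_mul_rlIntegral {ρ α a x : ℝ} (hρ : 0 < ρ) (hα : α ≠ 0) (ha : 0 ≤ a)
    (hax : a ≤ x) (φ : ℝ → ℝ) :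
    igral ρ α a φ x = ρ ^ (-α) * rlIntegral α (a ^ ρ) (fun u => φ (u ^ ρ⁻¹)) (x ^ ρ) := by
  have hsubst : ∫ u in Ioo (a ^ ρ) (x ^ ρ), (x ^ ρ - u) ^ (α - 1) * φ (u ^ ρ⁻¹) =
      ρ * ∫ t in Ioo a x, t ^ (ρ - 1) * φ t * (x ^ ρ - t ^ ρ) ^ (α - 1) := by
    rw [← image_rpow_Ioo hρ ha hax, integral_image_eq_integral_abs_deriv_smul measurableSet_Ioo
      (fun t ht => (hasDerivAt_rpow_const (Or.inl (ha.trans_lt ht.1).ne')).hasDerivWithinAt)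
      ((strictMonoOn_rpow_Ici_of_exponent_pos hρ).injOn.mono fun _ ht => ha.trans ht.1.le),
      ← integral_const_mul]
    refine setIntegral_congr_fun measurableSet_Ioo fun t ht => ?_
    have ht0 : 0 < t := ha.trans_lt ht.1
    rw [abs_of_pos (by positivity), rpow_rpow_inv ht0.le hρ.ne', smul_eq_mul]
    ring
  rw [igral, if_neg hα, rlIntegral, intervalIntegral.integral_of_le hax,
    integral_Ioc_eq_integral_Ioo, hsubst, rpow_sub hρ, rpow_one, rpow_neg hρ.le]
  field_simp

lemma MemW.exists_abs_le {ρ κ a b : ℝ} {ψ : ℝ → ℝ} (hρ : 0 < ρ) (ha : 0 ≤ a)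
    (hψ : MemW ρ κ a b ψ) : ∃ C, ∀ t ∈ Ioc a b, |ψ t| ≤ C * (t ^ ρ - a ^ ρ) ^ (-κ) := by
  obtain ⟨h, hc, hh⟩ := hψ
  obtain ⟨M, hM⟩ := isCompact_Icc.exists_bound_of_continuousOn hc
  refine ⟨M / ρ ^ (-κ), fun t ht => ?_⟩
  have hw : 0 < (t ^ ρ - a ^ ρ) / ρ := div_pos (sub_pos.2 (rpow_lt_rpow ha ht.1 hρ)) hρ
  have hψt : ψ t = ((t ^ ρ - a ^ ρ) / ρ) ^ (-κ) * h t := by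
    rw [hh t ht, ← mul_assoc, ← rpow_add hw, neg_add_cancel, rpow_zero, one_mul]
  calc |ψ t| ≤ ((t ^ ρ - a ^ ρ) / ρ) ^ (-κ) * M := by
        rw [hψt, abs_mul, abs_of_pos (rpow_pos_of_pos hw _)]
        gcongr
        exact hM t (Ioc_subset_Icc_self ht)
    _ = M / ρ ^ (-κ) * (t ^ ρ - a ^ ρ) ^ (-κ) := by
        rw [div_rpow (sub_pos.2 (rpow_lt_rpow ha ht.1 hρ)).le hρ.le]
        ring

theorem igral_igral {ρ α μ a b x : ℝ} {ψ : ℝ → ℝ} (hρ : 0 < ρ) (hα : 0 < α) (hμ : 0 < μ)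
    (ha : 0 ≤ a) (hψm : Measurable ψ) (hψ : MemW ρ (1 - (α + μ)) a b ψ) (hx : x ∈ Ioc a b) :
    igral ρ α a (igral ρ μ a ψ) x = igral ρ (α + μ) a ψ x := by
  obtain ⟨C, hC⟩ := hψ.exists_abs_le hρ ha
  have hbound : ∀ v ∈ Ioo (a ^ ρ) (x ^ ρ), |ψ (v ^ ρ⁻¹)| ≤ C * (v - a ^ ρ) ^ (α + μ - 1) := by
    intro v hv
    have ht := rpow_inv_mem_Ioo hρ ha hx.1.le hv
    have hv0 : 0 ≤ v := (rpow_nonneg ha ρ).trans hv.1.le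
    simpa [rpow_inv_rpow hv0 hρ.ne'] using hC _ ⟨ht.1, ht.2.le.trans hx.2⟩
  have hinner : ∀ v ∈ Ioo (a ^ ρ) (x ^ ρ), igral ρ μ a ψ (v ^ ρ⁻¹) =
      ρ ^ (-μ) * rlIntegral μ (a ^ ρ) (fun u => ψ (u ^ ρ⁻¹)) v := by
    intro v hv
    have hv0 : 0 ≤ v := (rpow_nonneg ha ρ).trans hv.1.le
    rw [igral_eq_rpow_mul_rlIntegral hρ hμ.ne' ha (rpow_inv_mem_Ioo hρ ha hx.1.le hv).1.le,
      rpow_inv_rpow hv0 hρ.ne']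
  have hgm : Measurable fun u : ℝ => ψ (u ^ ρ⁻¹) := hψm.comp (measurable_id.pow_const _)
  rw [igral_eq_rpow_mul_rlIntegral hρ hα.ne' ha hx.1.le,
    igral_eq_rpow_mul_rlIntegral hρ (add_pos hα hμ).ne' ha hx.1.le, rlIntegral_congr hinner,
    rlIntegral_const_mul, rlIntegral_rlIntegral hα hμ (add_pos hα hμ) hgm.aestronglyMeasurable
      hbound, neg_add, rpow_add hρ, mul_assoc]

@[simp]
lemma igral_zero (ρ a : ℝ) (φ : ℝ → ℝ) : igral ρ 0 a φ = φ := by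
  ext x
  simp [igral]

lemma measurable_genD (ρ α a : ℝ) (φ : ℝ → ℝ) : Measurable (genD ρ α a φ) :=
  (measurable_id.pow_const _).mul (measurable_deriv _)

lemma hkD_eq_igral_genD {ρ α β γ a : ℝ} (φ : ℝ → ℝ) (hγ : γ = α + β * (1 - α)) :
    hkD ρ α β a φ = igral ρ (β * (1 - α)) a (genD ρ γ a φ) := by
  rw [hkD, show (1 - β) * (1 - α) = 1 - γ by rw [hγ]; ring]
  rfl

theorem igral_genD_eq_igral_hkD_general (ρ a b α β γ : ℝ) (φ : ℝ → ℝ) (hα0 : 0 < α)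
    (hα1 : α < 1) (hβ0 : 0 ≤ β) (hγ : γ = α + β * (1 - α))
    (hρ : 0 < ρ) (ha : 0 < a)
    (hDφ : MemW ρ (1 - γ) a b (genD ρ γ a φ)) :
    ∀ x ∈ Ioc a b, igral ρ γ a (genD ρ γ a φ) x = igral ρ α a (hkD ρ α β a φ) x := by
  intro x hx
  rw [hkD_eq_igral_genD φ hγ]
  rcases hβ0.eq_or_lt with rfl | hβ
  · simp [hγ]
  · subst hγ
    exact (igral_igral hρ hα0 (mul_pos hβ (sub_pos.2 hα1)) ha.le (measurable_genD _ _ _ _)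
      hDφ hx).symm

/-- `ρJ^γ ρD^γ φ = ρJ^α ρD^{α,β} φ`. -/
theorem igral_genD_eq_igral_hkD (ρ a b α β γ : ℝ) (φ : ℝ → ℝ) (hα0 : 0 < α)
    (hα1 : α < 1) (hβ0 : 0 ≤ β) (hβ1 : β ≤ 1) (hγ : γ = α + β * (1 - α))
    (hρ : 0 < ρ) (ha : 0 < a) (hab : a < b)
    (hφ : MemW ρ (1 - γ) a b φ) (hDφ : MemW ρ (1 - γ) a b (genD ρ γ a φ)) :
    ∀ x ∈ Ioc a b, igral ρ γ a (genD ρ γ a φ) x = igral ρ α a (hkD ρ α β a φ) x :=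
  igral_genD_eq_igral_hkD_general ρ a b α β γ φ hα0 hα1 hβ0 hγ hρ ha hDφ
end

section
/- The function φ(x) = c ((x^ρ−a^ρ)/ρ)^{γ−1} E_{α,γ}[λ ((x^ρ−a^ρ)/ρ)^{α}] solves the homogeneous Cauchy problem (ρD_{a+}^{α,β} φ)(x) = λ φ(x) for x ∈ (a,b], with initial condition lim_{x→a+} (ρJ_{a+}^{1−γ} φ)(x) = c, where 0<α<1, 0≤β≤1, γ = α+β(1−α), ρ>0, λ, c ∈ ℝ. -/
open Real MeasureTheory Set Filter Topology

/-!
Write `u = (x^ρ - a^ρ)/ρ` and `E_{α,μ}` for the Mittag-Leffler function. Expanding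
`c u^{μ-1} E_{α,μ}(λ u^α)` as a power series and integrating termwise, the substitution
`t^ρ = a^ρ + w (x^ρ - a^ρ)` turns each term of `ρJ^σ` into a Beta integral, so `ρJ^σ` maps
`c u^{μ-1} E_{α,μ}(λ u^α)` to `c u^{μ+σ-1} E_{α,μ+σ}(λ u^α)`. As `γ + (1-β)(1-α) = 1`, the
inner integral in `ρD^{α,β} φ` is `c E_{α,1}(λ u^α)`; since `α E'_{α,1} = E_{α,α}`, its
`δ_ρ`-derivative is `λ c u^{α-1} E_{α,α}(λ u^α)`, and the outer integral of order `β(1-α)`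
raises the index `α` back to `γ`. In the same way `ρJ^{1-γ} φ = c E_{α,1}(λ u^α)`, which tends
to `c E_{α,1}(0) = c`. Termwise integration is justified by the ratio test, using Wendel's
inequality `Γ(s+1-α) ≤ s^{1-α} Γ(s)` to see that `Γ(s)/Γ(s+α) → 0`.
-/

theorem rpow_mul_rpow_pow {u : ℝ} (hu : 0 < u) (α ν : ℝ) (k : ℕ) :
    u ^ ν * (u ^ α) ^ k = u ^ (α * k + ν) := by
  rw [← rpow_natCast, ← rpow_mul hu.le, ← rpow_add hu, add_comm, mul_comm α]

theorem Gamma_add_one_sub_le_Gamma_mul_rpow {s α : ℝ} (hs : 0 < s) (hα0 : 0 < α)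
    (hα1 : α < 1) :
    Gamma (s + 1 - α) ≤ Gamma s * s ^ (1 - α) := by
  have hconv := Gamma_mul_add_mul_le_rpow_Gamma_mul_rpow_Gamma hs (by linarith : 0 < s + 1)
    hα0 (by linarith : 0 < 1 - α) (by ring)
  rw [show α * s + (1 - α) * (s + 1) = s + 1 - α by ring, Gamma_add_one hs.ne',
    mul_rpow hs.le (Gamma_pos_of_pos hs).le] at hconv
  calc Gamma (s + 1 - α) ≤ Gamma s ^ α * (s ^ (1 - α) * Gamma s ^ (1 - α)) := hconv
    _ = Gamma s * s ^ (1 - α) := by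
      rw [mul_left_comm, ← rpow_add (Gamma_pos_of_pos hs), add_sub_cancel, rpow_one, mul_comm]

theorem tendsto_Gamma_div_Gamma_add_atTop {α : ℝ} (hα0 : 0 < α) (hα1 : α < 1) :
    Tendsto (fun x => Gamma x / Gamma (x + α)) atTop (𝓝 0) := by
  have hbound : ∀ᶠ x in atTop, Gamma x / Gamma (x + α) ≤ 2 ^ (1 - α) * x ^ (-α) := by
    filter_upwards [eventually_ge_atTop α] with x hx
    have hx0 : 0 < x := hα0.trans_le hx
    have hGx : 0 < Gamma (x + α) := Gamma_pos_of_pos (by linarith)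
    have hwendel := Gamma_add_one_sub_le_Gamma_mul_rpow (by linarith : 0 < x + α) hα0 hα1
    rw [show x + α + 1 - α = x + 1 by ring, Gamma_add_one hx0.ne'] at hwendel
    calc Gamma x / Gamma (x + α) ≤ (x + α) ^ (1 - α) / x := by
          rw [div_le_div_iff₀ hGx hx0]; linarith
      _ ≤ (2 * x) ^ (1 - α) / x := by gcongr; linarith
      _ = 2 ^ (1 - α) * x ^ (-α) := by
          rw [mul_rpow zero_le_two hx0.le, mul_div_assoc, rpow_sub hx0, rpow_one,
            rpow_neg hx0.le, div_div_cancel_left' hx0.ne']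
  refine tendsto_of_tendsto_of_tendsto_of_le_of_le' tendsto_const_nhds ?_ ?_ hbound
  · simpa using (tendsto_rpow_neg_atTop hα0).const_mul (2 ^ (1 - α))
  · filter_upwards [eventually_gt_atTop 0] with x hx
    exact div_nonneg (Gamma_pos_of_pos hx).le (Gamma_pos_of_pos (by linarith)).le

noncomputable def mittagLeffler (α γ z : ℝ) : ℝ :=
  ∑' k : ℕ, z ^ k / Gamma (α * k + γ)

theorem summable_mittagLeffler {α μ : ℝ} (hα0 : 0 < α) (hα1 : α < 1) (hμ : 0 < μ) (z : ℝ) :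
    Summable fun k : ℕ => z ^ k / Gamma (α * k + μ) := by
  set r := |z| + 1
  have hr : 0 < r := by positivity
  have hG : ∀ k : ℕ, 0 < Gamma (α * k + μ) := fun k => Gamma_pos_of_pos (by positivity)
  have hratio : ∀ k : ℕ,
      ‖r ^ (k + 1) / Gamma (α * ↑(k + 1) + μ)‖ / ‖r ^ k / Gamma (α * k + μ)‖
        = r * (Gamma (α * k + μ) / Gamma (α * k + μ + α)) := by
    intro k
    rw [Real.norm_of_nonneg (div_nonneg (by positivity) (hG _).le),
      Real.norm_of_nonneg (div_nonneg (by positivity) (hG _).le), pow_succ]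
    push_cast
    rw [show α * (k + 1 : ℝ) + μ = α * k + μ + α by ring]
    field_simp
  have hr_summable : Summable fun k : ℕ => r ^ k / Gamma (α * k + μ) := by
    refine summable_of_ratio_test_tendsto_lt_one zero_lt_one
      (Eventually.of_forall fun k => (div_pos (pow_pos hr k) (hG k)).ne') ?_
    simp_rw [hratio]
    have hlin : Tendsto (fun k : ℕ => α * k + μ) atTop atTop :=
      tendsto_atTop_add_const_right _ μ (tendsto_natCast_atTop_atTop.const_mul_atTop hα0)
    simpa using ((tendsto_Gamma_div_Gamma_add_atTop hα0 hα1).comp hlin).const_mul r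
  refine hr_summable.of_norm_bounded fun k => ?_
  rw [norm_div, norm_pow, Real.norm_of_nonneg (hG k).le, Real.norm_eq_abs]
  gcongr
  linarith

theorem mittagLeffler_zero (α μ : ℝ) : mittagLeffler α μ 0 = (Gamma μ)⁻¹ := by
  rw [mittagLeffler, tsum_eq_single 0 fun k hk => by simp [zero_pow hk]]
  simp

theorem natCast_mul_pow_pred_le_two_mul_pow {w R : ℝ} (hR : 1 ≤ R) (hw : |w| ≤ R) (k : ℕ) :
    k * |w| ^ (k - 1) ≤ (2 * R) ^ k := by
  have hk : (k : ℝ) ≤ 2 ^ k := by exact_mod_cast Nat.lt_two_pow_self.le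
  have hpow : |w| ^ (k - 1) ≤ R ^ k :=
    (pow_le_pow_left₀ (abs_nonneg w) hw _).trans (pow_le_pow_right₀ hR (Nat.sub_le k 1))
  rw [mul_pow]
  exact mul_le_mul hk hpow (by positivity) (by positivity)

theorem hasDerivAt_mittagLeffler {α μ : ℝ} (hα0 : 0 < α) (hα1 : α < 1) (hμ : 0 < μ) (z : ℝ) :
    HasDerivAt (mittagLeffler α μ) (∑' k : ℕ, k * z ^ (k - 1) / Gamma (α * k + μ)) z := by
  set R := |z| + 1
  have hz : z ∈ Metric.ball (0 : ℝ) R := by simp [R]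
  refine hasDerivAt_tsum_of_isPreconnected (summable_mittagLeffler hα0 hα1 hμ (2 * R))
    Metric.isOpen_ball (convex_ball 0 R).isPreconnected
    (fun k w _ => (hasDerivAt_pow k w).div_const _) (fun k w hw => ?_) hz
    (summable_mittagLeffler hα0 hα1 hμ z) hz
  have hG : 0 < Gamma (α * k + μ) := Gamma_pos_of_pos (by positivity)
  rw [norm_div, norm_mul, norm_pow, Real.norm_of_nonneg hG.le, RCLike.norm_natCast,
    Real.norm_eq_abs]
  gcongr
  exact natCast_mul_pow_pred_le_two_mul_pow (by simp [R])
    (by simpa using (mem_ball_zero_iff.1 hw).le) k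

theorem hasDerivAt_mittagLeffler_one {α : ℝ} (hα0 : 0 < α) (hα1 : α < 1) (z : ℝ) :
    HasDerivAt (mittagLeffler α 1) (mittagLeffler α α z / α) z := by
  have hterm : ∀ k : ℕ, ((k + 1 : ℕ) : ℝ) * z ^ (k + 1 - 1) / Gamma (α * (k + 1 : ℕ) + 1)
      = z ^ k / Gamma (α * k + α) / α := by
    intro k
    have hpos : 0 < α * k + α := by positivity
    rw [show α * ((k + 1 : ℕ) : ℝ) + 1 = α * k + α + 1 by push_cast; ring,
      Gamma_add_one hpos.ne', Nat.add_sub_cancel]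
    push_cast
    field_simp
  convert hasDerivAt_mittagLeffler hα0 hα1 one_pos z using 1
  rw [tsum_eq_zero_add' ?_]
  · simp only [hterm, CharP.cast_eq_zero, zero_mul, zero_div, zero_add, tsum_div_const,
      mittagLeffler]
  · simpa only [hterm] using (summable_mittagLeffler hα0 hα1 hα0 z).div_const α

theorem continuous_mittagLeffler {α μ : ℝ} (hα0 : 0 < α) (hα1 : α < 1) (hμ : 0 < μ) :
    Continuous (mittagLeffler α μ) :=
  continuous_iff_continuousAt.2 fun z => (hasDerivAt_mittagLeffler hα0 hα1 hμ z).continuousAt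

theorem ofReal_rpow_mul_one_sub_rpow_s18 {w : ℝ} (hw0 : 0 ≤ w) (hw1 : w ≤ 1) (u v : ℝ) :
    ((w ^ (u - 1) * (1 - w) ^ (v - 1) : ℝ) : ℂ)
      = (w : ℂ) ^ ((u : ℂ) - 1) * (1 - (w : ℂ)) ^ ((v : ℂ) - 1) := by
  push_cast [Complex.ofReal_mul, Complex.ofReal_cpow hw0, Complex.ofReal_cpow (sub_nonneg.2 hw1)]
  rfl

theorem integrableOn_rpow_mul_one_sub_rpow_s18 {u v : ℝ} (hu : 0 < u) (hv : 0 < v) :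
    IntegrableOn (fun w : ℝ => w ^ (u - 1) * (1 - w) ^ (v - 1)) (Ioo 0 1) := by
  have hC := Complex.betaIntegral_convergent (u := u) (v := v) (by simpa) (by simpa)
  rw [intervalIntegrable_iff_integrableOn_Ioc_of_le zero_le_one] at hC
  refine (IntegrableOn.mono_set hC.re Ioo_subset_Ioc_self).congr_fun (fun w hw => ?_)
    measurableSet_Ioo
  dsimp only
  rw [← ofReal_rpow_mul_one_sub_rpow_s18 hw.1.le hw.2.le, RCLike.re_to_complex, Complex.ofReal_re]

theorem integral_rpow_mul_one_sub_rpow_s18 {u v : ℝ} (hu : 0 < u) (hv : 0 < v) :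
    ∫ w in Ioo (0 : ℝ) 1, w ^ (u - 1) * (1 - w) ^ (v - 1) = ProbabilityTheory.beta u v := by
  rw [ProbabilityTheory.beta_eq_betaIntegralReal u v hu hv, Complex.betaIntegral,
    intervalIntegral.integral_of_le zero_le_one, ← integral_Ioc_eq_integral_Ioo,
    ← RCLike.re_to_complex, ← integral_re]
  · refine setIntegral_congr_fun measurableSet_Ioc fun w hw => ?_
    rw [← ofReal_rpow_mul_one_sub_rpow_s18 hw.1.le hw.2, RCLike.re_to_complex, Complex.ofReal_re]
  · have hC := Complex.betaIntegral_convergent (u := u) (v := v) (by simpa) (by simpa)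
    rwa [intervalIntegrable_iff_integrableOn_Ioc_of_le zero_le_one] at hC

noncomputable def powGap (ρ a x : ℝ) : ℝ := (x ^ ρ - a ^ ρ) / ρ

section PowGap

variable {ρ a x t : ℝ}

theorem powGap_self (ρ a : ℝ) : powGap ρ a a = 0 := by simp [powGap]

theorem powGap_pos (hρ : 0 < ρ) (ha : 0 ≤ a) (hax : a < x) : 0 < powGap ρ a x :=
  div_pos (sub_pos.2 (rpow_lt_rpow ha hax hρ)) hρ

theorem continuous_powGap (hρ : 0 ≤ ρ) (a : ℝ) : Continuous (powGap ρ a) :=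
  ((continuous_rpow_const hρ).sub continuous_const).div_const ρ

theorem hasDerivAt_powGap (hρ : ρ ≠ 0) (a : ℝ) (hx : 0 < x) :
    HasDerivAt (powGap ρ a) (x ^ (ρ - 1)) x := by
  have := ((hasDerivAt_rpow_const (p := ρ) (Or.inl hx.ne')).sub_const (a ^ ρ)).div_const ρ
  rwa [mul_div_cancel_left₀ _ hρ] at this

theorem rpow_sub_rpow_eq_mul_powGap_sub (hρ : ρ ≠ 0) (a x t : ℝ) :
    x ^ ρ - t ^ ρ = ρ * (powGap ρ a x - powGap ρ a t) := by
  simp only [powGap]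
  field_simp
  ring

theorem integral_Icc_powGap_div_comp (hρ : 0 < ρ) (ha : 0 ≤ a) (hax : a < x) (g : ℝ → ℝ) :
    ∫ t in Icc a x, t ^ (ρ - 1) / powGap ρ a x * g (powGap ρ a t / powGap ρ a x)
      = ∫ w in Icc 0 1, g w := by
  have hU := (powGap_pos hρ ha hax).ne'
  have := integral_Icc_deriv_smul_of_deriv_nonneg (g := g)
    ((continuous_powGap hρ.le a).div_const _).continuousOn
    (fun t ht => (hasDerivAt_powGap hρ.ne' a (ha.trans_lt ht.1)).div_const (powGap ρ a x))
    (fun t ht => div_nonneg (rpow_nonneg (ha.trans ht.1.le) _) (powGap_pos hρ ha hax).le)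
    hax.le
  rwa [powGap_self, zero_div, div_self hU] at this

theorem integrableOn_Icc_powGap_div_comp_iff (hρ : 0 < ρ) (ha : 0 ≤ a) (hax : a < x)
    (g : ℝ → ℝ) :
    IntegrableOn (fun t => t ^ (ρ - 1) / powGap ρ a x * g (powGap ρ a t / powGap ρ a x))
      (Icc a x) ↔ IntegrableOn g (Icc 0 1) := by
  have hU := (powGap_pos hρ ha hax).ne'
  have := integrableOn_Icc_deriv_smul_iff_of_deriv_nonneg (g := g)
    ((continuous_powGap hρ.le a).div_const _).continuousOn
    (fun t ht => (hasDerivAt_powGap hρ.ne' a (ha.trans_lt ht.1)).div_const (powGap ρ a x))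
    (fun t ht => div_nonneg (rpow_nonneg (ha.trans ht.1.le) _) (powGap_pos hρ ha hax).le)
    hax.le
  rwa [powGap_self, zero_div, div_self hU] at this

theorem powGap_kernel_eq (hρ : 0 < ρ) (ha : 0 ≤ a) (ht : t ∈ Ioo a x) (ν σ : ℝ) :
    t ^ (ρ - 1) * powGap ρ a t ^ (ν - 1) * (x ^ ρ - t ^ ρ) ^ (σ - 1)
      = ρ ^ (σ - 1) * powGap ρ a x ^ (ν + σ - 1) *
        (t ^ (ρ - 1) / powGap ρ a x * ((powGap ρ a t / powGap ρ a x) ^ (ν - 1) *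
          (1 - powGap ρ a t / powGap ρ a x) ^ (σ - 1))) := by
  set U := powGap ρ a x
  set u := powGap ρ a t
  have hu : 0 < u := powGap_pos hρ ha ht.1
  have hU : 0 < U := powGap_pos hρ ha (ht.1.trans ht.2)
  have huU : 0 < U - u := sub_pos.2 (div_lt_div_of_pos_right
    (sub_lt_sub_right (rpow_lt_rpow (ha.trans ht.1.le) ht.2 hρ) _) hρ)
  rw [rpow_sub_rpow_eq_mul_powGap_sub hρ.ne' a, one_sub_div hU.ne', div_rpow hu.le hU.le,
    div_rpow huU.le hU.le, mul_rpow hρ.le huU.le,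
    show ν + σ - 1 = (ν - 1) + (σ - 1) + 1 by ring, rpow_add hU, rpow_add hU, rpow_one]
  field_simp

theorem powGap_kernel_nonneg (hρ : 0 < ρ) (ha : 0 ≤ a) (ht : t ∈ Ioc a x) (ν σ : ℝ) :
    0 ≤ t ^ (ρ - 1) * powGap ρ a t ^ (ν - 1) * (x ^ ρ - t ^ ρ) ^ (σ - 1) := by
  have ht0 : 0 ≤ t := ha.trans ht.1.le
  have hxt : t ^ ρ ≤ x ^ ρ := rpow_le_rpow ht0 ht.2 hρ.le
  exact mul_nonneg (mul_nonneg (rpow_nonneg ht0 _) (rpow_nonneg (powGap_pos hρ ha ht.1).le _))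
    (rpow_nonneg (sub_nonneg.2 hxt) _)

theorem integrableOn_powGap_kernel (hρ : 0 < ρ) (ha : 0 ≤ a) (hax : a < x) {ν σ : ℝ}
    (hν : 0 < ν) (hσ : 0 < σ) :
    IntegrableOn (fun t => t ^ (ρ - 1) * powGap ρ a t ^ (ν - 1) * (x ^ ρ - t ^ ρ) ^ (σ - 1))
      (Ioc a x) := by
  have hbeta : IntegrableOn (fun w : ℝ => w ^ (ν - 1) * (1 - w) ^ (σ - 1)) (Icc 0 1) := by
    rw [integrableOn_Icc_iff_integrableOn_Ioo]
    exact integrableOn_rpow_mul_one_sub_rpow_s18 hν hσ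
  have hsubst := ((integrableOn_Icc_powGap_div_comp_iff hρ ha hax _).2 hbeta).const_mul
    (ρ ^ (σ - 1) * powGap ρ a x ^ (ν + σ - 1))
  rw [integrableOn_Ioc_iff_integrableOn_Ioo]
  exact (IntegrableOn.mono_set hsubst Ioo_subset_Icc_self).congr_fun
    (fun t ht => (powGap_kernel_eq hρ ha ht ν σ).symm) measurableSet_Ioo

theorem integral_powGap_kernel (hρ : 0 < ρ) (ha : 0 ≤ a) (hax : a < x) {ν σ : ℝ}
    (hν : 0 < ν) (hσ : 0 < σ) :
    ∫ t in Ioc a x, t ^ (ρ - 1) * powGap ρ a t ^ (ν - 1) * (x ^ ρ - t ^ ρ) ^ (σ - 1)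
      = ProbabilityTheory.beta ν σ * ρ ^ (σ - 1) * powGap ρ a x ^ (ν + σ - 1) := by
  rw [integral_Ioc_eq_integral_Ioo, setIntegral_congr_fun measurableSet_Ioo
      (fun t ht => powGap_kernel_eq hρ ha ht ν σ), integral_const_mul,
    ← integral_Icc_eq_integral_Ioo,
    integral_Icc_powGap_div_comp hρ ha hax fun w => w ^ (ν - 1) * (1 - w) ^ (σ - 1),
    integral_Icc_eq_integral_Ioo, integral_rpow_mul_one_sub_rpow_s18 hν hσ]
  ring

end PowGap

theorem pow_div_Gamma_mul_integral_powGap_kernel {ρ a x α μ σ : ℝ} {k : ℕ} (hρ : 0 < ρ)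
    (ha : 0 ≤ a) (hax : a < x) (hν : 0 < α * k + μ) (hσ : 0 < σ) (c lam : ℝ) :
    c * lam ^ k / Gamma (α * k + μ) *
        ∫ t in Ioc a x, t ^ (ρ - 1) * powGap ρ a t ^ (α * k + μ - 1) * (x ^ ρ - t ^ ρ) ^ (σ - 1)
      = c * Gamma σ * ρ ^ (σ - 1) * powGap ρ a x ^ (μ + σ - 1) *
          ((lam * powGap ρ a x ^ α) ^ k / Gamma (α * k + (μ + σ))) := by
  set U := powGap ρ a x
  have hU : 0 < U := powGap_pos hρ ha hax
  have hsplit : U ^ (α * k + μ + σ - 1) = U ^ (μ + σ - 1) * (U ^ α) ^ k := by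
    rw [rpow_mul_rpow_pow hU]
    ring_nf
  rw [integral_powGap_kernel hρ ha hax hν hσ, ProbabilityTheory.beta, mul_pow, hsplit,
    show α * k + μ + σ = α * k + (μ + σ) by ring]
  field_simp [(Gamma_pos_of_pos hν).ne']

theorem igral_congr_of_eqOn {ρ σ a x : ℝ} {f g : ℝ → ℝ} (hax : a < x)
    (h : EqOn f g (Ioc a x)) :
    igral ρ σ a f x = igral ρ σ a g x := by
  unfold igral
  split_ifs
  · exact h ⟨hax, le_rfl⟩
  · rw [intervalIntegral.integral_of_le hax.le, intervalIntegral.integral_of_le hax.le,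
      setIntegral_congr_fun measurableSet_Ioc fun t ht => by rw [h ht]]

noncomputable def mlProfile (ρ a α μ lam c : ℝ) (y : ℝ) : ℝ :=
  c * powGap ρ a y ^ (μ - 1) * mittagLeffler α μ (lam * powGap ρ a y ^ α)

section MLProfile

variable {ρ a x α μ σ lam c : ℝ}

theorem mlProfile_eq_tsum (hu : 0 < powGap ρ a x) :
    mlProfile ρ a α μ lam c x
      = ∑' k : ℕ, c * lam ^ k / Gamma (α * k + μ) * powGap ρ a x ^ (α * k + μ - 1) := by
  rw [mlProfile, mittagLeffler, ← tsum_mul_left]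
  refine tsum_congr fun k => ?_
  rw [show α * k + μ - 1 = α * k + (μ - 1) by ring, ← rpow_mul_rpow_pow hu α (μ - 1), mul_pow]
  ring

theorem igral_mlProfile (hρ : 0 < ρ) (ha : 0 ≤ a) (hax : a < x) (hα0 : 0 < α) (hα1 : α < 1)
    (hμ : 0 < μ) (hσ : 0 ≤ σ) :
    igral ρ σ a (mlProfile ρ a α μ lam c) x = mlProfile ρ a α (μ + σ) lam c x := by
  rcases hσ.eq_or_lt with rfl | hσ
  · simp [igral]
  set K : ℝ → ℝ → ℝ := fun ν t =>
    t ^ (ρ - 1) * powGap ρ a t ^ (ν - 1) * (x ^ ρ - t ^ ρ) ^ (σ - 1)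
  set F : ℕ → ℝ → ℝ := fun k t => c * lam ^ k / Gamma (α * k + μ) * K (α * k + μ) t
  have hν : ∀ k : ℕ, 0 < α * k + μ := fun k => by positivity
  have hcoeff := fun (c' lam' : ℝ) (k : ℕ) =>
    pow_div_Gamma_mul_integral_powGap_kernel hρ ha hax (hν k) hσ c' lam'
  have hexpand : ∀ t ∈ Ioc a x,
      t ^ (ρ - 1) * mlProfile ρ a α μ lam c t * (x ^ ρ - t ^ ρ) ^ (σ - 1) = ∑' k, F k t := by
    intro t ht
    rw [mlProfile_eq_tsum (powGap_pos hρ ha ht.1), ← tsum_mul_left, ← tsum_mul_right]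
    exact tsum_congr fun k => by simp only [F, K]; ring
  have hint : ∀ k, Integrable (F k) (volume.restrict (Ioc a x)) := fun k =>
    (integrableOn_powGap_kernel hρ ha hax (hν k) hσ).const_mul _
  have hsummable : Summable fun k => ∫ t in Ioc a x, ‖F k t‖ := by
    refine ((summable_mittagLeffler (μ := μ + σ) hα0 hα1 (by positivity)
      (|lam| * powGap ρ a x ^ α)).mul_left
        (|c| * Gamma σ * ρ ^ (σ - 1) * powGap ρ a x ^ (μ + σ - 1))).congr fun k => ?_
    have hnorm : ∀ t ∈ Ioc a x,
        ‖F k t‖ = |c| * |lam| ^ k / Gamma (α * k + μ) * K (α * k + μ) t := fun t ht => by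
      rw [Real.norm_eq_abs, abs_mul, abs_of_nonneg (powGap_kernel_nonneg hρ ha ht _ _), abs_div,
        abs_mul, abs_pow, abs_of_pos (Gamma_pos_of_pos (hν k))]
    rw [setIntegral_congr_fun measurableSet_Ioc hnorm, integral_const_mul, hcoeff, mul_assoc]
  rw [igral, if_neg hσ.ne', intervalIntegral.integral_of_le hax.le,
    setIntegral_congr_fun measurableSet_Ioc hexpand,
    ← integral_tsum_of_summable_integral_norm hint hsummable]
  simp only [F, integral_const_mul]
  rw [tsum_congr (hcoeff c lam), tsum_mul_left, mlProfile, mittagLeffler]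
  have hρσ : ρ ^ (1 - σ) * ρ ^ (σ - 1) = 1 := by rw [← rpow_add hρ]; simp
  set S := ∑' k : ℕ, (lam * powGap ρ a x ^ α) ^ k / Gamma (α * k + (μ + σ))
  field_simp [(Gamma_pos_of_pos hσ).ne']
  linear_combination c * powGap ρ a x ^ (μ + σ - 1) * S * hρσ

end MLProfile

section MLProfileOne

variable {ρ a y α lam c : ℝ}

theorem mlProfile_one (ρ a α lam c : ℝ) :
    mlProfile ρ a α 1 lam c = fun y => c * mittagLeffler α 1 (lam * powGap ρ a y ^ α) := by
  funext y
  simp [mlProfile]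

theorem mul_deriv_mlProfile_one (hρ : 0 < ρ) (ha : 0 ≤ a) (hy : a < y) (hα0 : 0 < α)
    (hα1 : α < 1) :
    y ^ (1 - ρ) * deriv (mlProfile ρ a α 1 lam c) y = mlProfile ρ a α α lam (lam * c) y := by
  have hy0 : 0 < y := ha.trans_lt hy
  have hu : 0 < powGap ρ a y := powGap_pos hρ ha hy
  have hinner :=
    ((hasDerivAt_powGap hρ.ne' a hy0).rpow_const (p := α) (Or.inl hu.ne')).const_mul lam
  have hE := ((hasDerivAt_mittagLeffler_one hα0 hα1 _).comp y hinner).const_mul c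
  simp only [Function.comp_def] at hE
  rw [mlProfile_one, hE.deriv, mlProfile]
  set E := mittagLeffler α α (lam * powGap ρ a y ^ α)
  have hyρ : y ^ (1 - ρ) * y ^ (ρ - 1) = 1 := by rw [← rpow_add hy0]; simp
  have hα : E / α * α = E := div_mul_cancel₀ E hα0.ne'
  linear_combination
    (lam * c * powGap ρ a y ^ (α - 1)) * (y ^ (1 - ρ) * y ^ (ρ - 1) * hα + E * hyρ)

theorem tendsto_mlProfile_one (hρ : 0 < ρ) (hα0 : 0 < α) (hα1 : α < 1) :
    Tendsto (mlProfile ρ a α 1 lam c) (𝓝[>] a) (𝓝 c) := by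
  have hcont : Continuous (mlProfile ρ a α 1 lam c) := by
    rw [mlProfile_one]
    exact continuous_const.mul ((continuous_mittagLeffler hα0 hα1 one_pos).comp
      (continuous_const.mul ((continuous_powGap hρ.le a).rpow_const fun _ => Or.inr hα0.le)))
  have hval : mlProfile ρ a α 1 lam c a = c := by
    simp [mlProfile_one, powGap_self, zero_rpow hα0.ne', mittagLeffler_zero]
  simpa [hval] using (hcont.tendsto a).mono_left nhdsWithin_le_nhds

end MLProfileOne

theorem homogeneous_cauchy_solution_general (ρ a b α β γ lam c : ℝ) (hα0 : 0 < α)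
    (hα1 : α < 1) (hβ0 : 0 ≤ β) (hβ1 : β ≤ 1) (hγ : γ = α + β * (1 - α))
    (hρ : 0 < ρ) (ha : 0 < a) :
    (∀ x ∈ Ioc a b,
      hkD ρ α β a (fun y => c * ((y ^ ρ - a ^ ρ) / ρ) ^ (γ - 1) *
        ∑' k : ℕ, (lam * ((y ^ ρ - a ^ ρ) / ρ) ^ α) ^ k /
          Real.Gamma (α * k + γ)) x =
        lam * (c * ((x ^ ρ - a ^ ρ) / ρ) ^ (γ - 1) *
          ∑' k : ℕ, (lam * ((x ^ ρ - a ^ ρ) / ρ) ^ α) ^ k /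
            Real.Gamma (α * k + γ))) ∧
    Tendsto (igral ρ (1 - γ) a
        (fun y => c * ((y ^ ρ - a ^ ρ) / ρ) ^ (γ - 1) *
          ∑' k : ℕ, (lam * ((y ^ ρ - a ^ ρ) / ρ) ^ α) ^ k /
            Real.Gamma (α * k + γ)))
      (𝓝[>] a) (𝓝 c) := by
  have hγ0 : 0 < γ := by nlinarith
  have hinner : ∀ y ∈ Ioi a, igral ρ ((1 - β) * (1 - α)) a (mlProfile ρ a α γ lam c) y
      = mlProfile ρ a α 1 lam c y := fun y hy => by
    rw [igral_mlProfile hρ ha.le hy hα0 hα1 hγ0 (by nlinarith), hγ]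
    ring_nf
  refine ⟨fun x hx => ?_, ?_⟩
  · change hkD ρ α β a (mlProfile ρ a α γ lam c) x = lam * mlProfile ρ a α γ lam c x
    have hδ : EqOn (fun s => s ^ (1 - ρ) *
        deriv (igral ρ ((1 - β) * (1 - α)) a (mlProfile ρ a α γ lam c)) s)
        (mlProfile ρ a α α lam (lam * c)) (Ioc a x) := fun s hs => by
      dsimp only
      rw [(eventuallyEq_of_mem (Ioi_mem_nhds hs.1) hinner).deriv_eq]
      exact mul_deriv_mlProfile_one hρ ha.le hs.1 hα0 hα1
    rw [hkD, igral_congr_of_eqOn hx.1 hδ,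
      igral_mlProfile hρ ha.le hx.1 hα0 hα1 hα0 (by nlinarith), ← hγ, mlProfile, mlProfile]
    ring
  · change Tendsto (igral ρ (1 - γ) a (mlProfile ρ a α γ lam c)) (𝓝[>] a) (𝓝 c)
    refine (tendsto_mlProfile_one (lam := lam) hρ hα0 hα1).congr' ?_
    filter_upwards [self_mem_nhdsWithin] with y hy
    rw [igral_mlProfile hρ ha.le hy hα0 hα1 hγ0 (by nlinarith), add_sub_cancel]

/-- The Mittag-Leffler function solves the homogeneous Hilfer–Katugampola
Cauchy problem. -/
theorem homogeneous_cauchy_solution (ρ a b α β γ lam c : ℝ) (hα0 : 0 < α)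
    (hα1 : α < 1) (hβ0 : 0 ≤ β) (hβ1 : β ≤ 1) (hγ : γ = α + β * (1 - α))
    (hρ : 0 < ρ) (ha : 0 < a) (hab : a < b) :
    (∀ x ∈ Ioc a b,
      hkD ρ α β a (fun y => c * ((y ^ ρ - a ^ ρ) / ρ) ^ (γ - 1) *
        ∑' k : ℕ, (lam * ((y ^ ρ - a ^ ρ) / ρ) ^ α) ^ k /
          Real.Gamma (α * k + γ)) x =
        lam * (c * ((x ^ ρ - a ^ ρ) / ρ) ^ (γ - 1) *
          ∑' k : ℕ, (lam * ((x ^ ρ - a ^ ρ) / ρ) ^ α) ^ k /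
            Real.Gamma (α * k + γ))) ∧
    Tendsto (igral ρ (1 - γ) a
        (fun y => c * ((y ^ ρ - a ^ ρ) / ρ) ^ (γ - 1) *
          ∑' k : ℕ, (lam * ((y ^ ρ - a ^ ρ) / ρ) ^ α) ^ k /
            Real.Gamma (α * k + γ)))
      (𝓝[>] a) (𝓝 c) :=
  homogeneous_cauchy_solution_general ρ a b α β γ lam c hα0 hα1 hβ0 hβ1 hγ hρ ha
end
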